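/- arXiv:1212.6244 — 7 statements merged into one kernel-verified Lean document; each statement's English description precedes it below -/
import Mathlib

section
/- Let p ∈ U. The open cell C(p) is a bounded subset of ℝ^{n+1} if and only if for every vertex i ∈ V that is not p-equivalent to the vertex n+1, there exist a vertex i' with i' ∼_p i and a vertex j adjacent to i' such that p_{i'} > p_j. (Equivalently: C(p) belongs to the bounded complex of the restricted graphical arrangement iff the acyclic orientation induced by p on the contraction G/p has the class of n+1 as its unique sink.) -/
open Finset

/-- The vertex-induced subgraph on `S` of the multigraph with edge-multiplicity
function `μ` is connected: any two vertices of `S` are joined by a walk inside `S`. -/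
def ConnectedOn {n : ℕ} (μ : Fin (n + 1) → Fin (n + 1) → ℕ) (S : Set (Fin (n + 1))) : Prop :=
  ∀ i ∈ S, ∀ j ∈ S, Relation.ReflTransGen (fun a b => a ∈ S ∧ b ∈ S ∧ 1 ≤ μ a b) i j

/-- The affine subspace `U = { x ∈ ℝ^{n+1} : x_{n+1} = 0, x_1 + ⋯ + x_n = 1 }`. -/
def U (n : ℕ) : Set (Fin (n + 1) → ℝ) :=
  {x | x (Fin.last n) = 0 ∧ ∑ i : Fin n, x i.castSucc = 1}

/-- The open cell of `p` in the restriction of the graphical arrangement of `μ` to `U`. -/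
def openCell {n : ℕ} (μ : Fin (n + 1) → Fin (n + 1) → ℕ) (p : Fin (n + 1) → ℝ) :
    Set (Fin (n + 1) → ℝ) :=
  {q | q ∈ U n ∧ ∀ i j, 1 ≤ μ i j →
    ((q i < q j ↔ p i < p j) ∧ (q i = q j ↔ p i = p j))}

/-- The closed cell of `p` in the restriction of the graphical arrangement of `μ` to `U`. -/
def closedCell {n : ℕ} (μ : Fin (n + 1) → Fin (n + 1) → ℕ) (p : Fin (n + 1) → ℝ) :
    Set (Fin (n + 1) → ℝ) :=
  {q | q ∈ U n ∧ ∀ i j, 1 ≤ μ i j →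
    ((p i < p j → q i ≤ q j) ∧ (p i = p j → q i = q j))}

/-- `p`-equivalence: `i ∼_p j` iff there is a path in the graph along which `p` is constant. -/
def pEquiv {n : ℕ} (μ : Fin (n + 1) → Fin (n + 1) → ℕ) (p : Fin (n + 1) → ℝ)
    (i j : Fin (n + 1)) : Prop :=
  Relation.ReflTransGen (fun a b => 1 ≤ μ a b ∧ p a = p b) i j

/-- `d_I(i)`: the number of edges from vertex `i` to the complement of `I`. -/
def dI {n : ℕ} (μ : Fin (n + 1) → Fin (n + 1) → ℕ) (I : Finset (Fin (n + 1)))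
    (i : Fin (n + 1)) : ℕ :=
  ∑ j ∈ Iᶜ, μ i j

/-- `ε_I(i) = d_I(i)` for `i ∈ I` and `0` otherwise. -/
def epsI {n : ℕ} (μ : Fin (n + 1) → Fin (n + 1) → ℕ) (I : Finset (Fin (n + 1)))
    (i : Fin (n + 1)) : ℕ :=
  if i ∈ I then dI μ I i else 0

/-- The point `(1/|I|) · e_I`, where `e_I` is the 0/1 indicator vector of `I`. -/
noncomputable def qI {n : ℕ} (I : Finset (Fin (n + 1))) : Fin (n + 1) → ℝ :=
  fun i => if i ∈ I then 1 / (I.card : ℝ) else 0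

/-- `D_i(p)`: the number of edges `ij` with `p_i > p_j`. -/
noncomputable def Dlab {n : ℕ} (μ : Fin (n + 1) → Fin (n + 1) → ℕ) (p : Fin (n + 1) → ℝ) (i : Fin n) : ℕ :=
  ∑ j ∈ Finset.univ.filter (fun j => p j < p i.castSucc), μ i.castSucc j

/-- The monomial `m_I = ∏_{i ∈ [n]} x_i^{ε_I(i)}`. -/
noncomputable def mI {n : ℕ} (k : Type*) [Field k] (μ : Fin (n + 1) → Fin (n + 1) → ℕ)
    (I : Finset (Fin (n + 1))) : MvPolynomial (Fin n) k :=
  ∏ i : Fin n, MvPolynomial.X i ^ epsI μ I i.castSucc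

/-- The monomial ideal `M_G = ⟨ m_I : ∅ ≠ I ⊆ [n] ⟩`. -/
noncomputable def MG {n : ℕ} (k : Type*) [Field k] (μ : Fin (n + 1) → Fin (n + 1) → ℕ) :
    Ideal (MvPolynomial (Fin n) k) :=
  Ideal.span {f | ∃ I : Finset (Fin (n + 1)), I.Nonempty ∧ Fin.last n ∉ I ∧ f = mI k μ I}

/-!
If every `p`-class other than that of `n+1` has an edge going down, then every `q ∈ C(p)` attains
its minimum on the class of `n+1`, where it vanishes, so `C(p) ⊆ [0,1]^{n+1}`.

Conversely, let `D` be a `p`-class, not that of `n+1`, without an edge going down, and let `K` be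
the set of vertices reached from `n+1` along edges on which `p` does not increase. Both sets are
closed under stepping down along edges, so `v = t·1_{Kᶜ} - 1_D` is weakly increasing along every
edge on which `p` weakly increases; with `t = |D|/|Kᶜ|` it lies in the direction space of `U`, and
then `p + r v ∈ C(p)` for all `r ≥ 0`. The ray is nondegenerate because some vertex lies outside
`K ∪ D`: connectivity gives an edge from `D` up to some `w`, and `p ≤ 0` on `K`, so if `K ∪ D`
were everything then `p ≤ 0` everywhere, against `∑ p_i = 1`.
-/

theorem Relation.ReflTransGen.exists_boundary {α : Type*} {r : α → α → Prop} {s : Set α}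
    {a b : α} (h : Relation.ReflTransGen r a b) (ha : a ∈ s) (hb : b ∉ s) :
    ∃ u ∈ s, ∃ w ∉ s, r u w := by
  induction h with
  | refl => exact absurd ha hb
  | @tail c b _ hcb ih =>
    by_cases hc : c ∈ s
    · exact ⟨c, hc, b, hb, hcb⟩
    · exact ih hc

theorem not_isBounded_of_forall_add_smul_mem {E : Type*} [NormedAddCommGroup E]
    [NormedSpace ℝ E] {s : Set E} {x v : E} (hv : v ≠ 0)
    (h : ∀ r : ℝ, 0 ≤ r → x + r • v ∈ s) :
    ¬ Bornology.IsBounded s := by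
  intro hs
  obtain ⟨C, hC⟩ := isBounded_iff_forall_norm_le.1 hs
  set r := (|C| + ‖x‖ + 1) / ‖v‖
  have hr : 0 ≤ r := by positivity
  have hrv : ‖r • v‖ = |C| + ‖x‖ + 1 := by
    rw [norm_smul, Real.norm_of_nonneg hr, div_mul_cancel₀ _ (norm_ne_zero_iff.2 hv)]
  have hsub : ‖r • v‖ ≤ ‖x + r • v‖ + ‖x‖ := by
    simpa using norm_sub_le (x + r • v) x
  linarith [hC _ (h r hr), le_abs_self C]

section Cells

variable {n : ℕ} {μ : Fin (n + 1) → Fin (n + 1) → ℕ} {p : Fin (n + 1) → ℝ}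

theorem pEquiv.apply_eq {a b : Fin (n + 1)} (h : pEquiv μ p a b) : p a = p b :=
  Relation.reflTransGen_le_of_equivalence_of_le (eq_equivalence.comap p) (fun _ _ h => h.2) _ _ h

theorem pEquiv.eq_of_mem_openCell {a b : Fin (n + 1)} (h : pEquiv μ p a b)
    {q : Fin (n + 1) → ℝ} (hq : q ∈ openCell μ p) : q a = q b :=
  Relation.reflTransGen_le_of_equivalence_of_le (eq_equivalence.comap q)
    (fun x y h => ((hq.2 x y h.1).2).2 h.2) _ _ h

theorem mem_Icc_of_mem_U_of_nonneg {q : Fin (n + 1) → ℝ} (hq : q ∈ U n) (h0 : 0 ≤ q) :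
    q ∈ Set.Icc 0 1 := by
  refine ⟨h0, fun x => ?_⟩
  cases x using Fin.lastCases with
  | last => simp [hq.1]
  | cast y =>
    calc q y.castSucc ≤ ∑ j : Fin n, q j.castSucc :=
          single_le_sum (f := fun j => q j.castSucc) (fun j _ => h0 _) (mem_univ y)
      _ = 1 := hq.2

theorem nonneg_of_mem_openCell (hsym : ∀ i j, μ i j = μ j i)
    (hdown : ∀ i, ¬ pEquiv μ p i (Fin.last n) →
      ∃ i' j, pEquiv μ p i i' ∧ 1 ≤ μ i' j ∧ p j < p i')
    {q : Fin (n + 1) → ℝ} (hq : q ∈ openCell μ p) : 0 ≤ q := by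
  obtain ⟨b, -, hb⟩ := exists_min_image univ q univ_nonempty
  suffices q b = 0 from fun x => this.symm.le.trans (hb x (mem_univ x))
  by_cases hbl : pEquiv μ p b (Fin.last n)
  · rw [hbl.eq_of_mem_openCell hq, hq.1.1]
  · obtain ⟨i', j, hbi', hμ, hlt⟩ := hdown b hbl
    have hqlt : q j < q i' := (hq.2 j i' (hsym i' j ▸ hμ)).1.2 hlt
    exact absurd (hb j (mem_univ j)) (hbi'.eq_of_mem_openCell hq ▸ hqlt.not_ge)

theorem isBounded_openCell (hsym : ∀ i j, μ i j = μ j i)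
    (hdown : ∀ i, ¬ pEquiv μ p i (Fin.last n) →
      ∃ i' j, pEquiv μ p i i' ∧ 1 ≤ μ i' j ∧ p j < p i') :
    Bornology.IsBounded (openCell μ p) :=
  (Metric.isBounded_Icc 0 1).subset fun _ hq =>
    mem_Icc_of_mem_U_of_nonneg hq.1 (nonneg_of_mem_openCell hsym hdown hq)

def EdgeMonotone (μ : Fin (n + 1) → Fin (n + 1) → ℕ) (p f : Fin (n + 1) → ℝ) : Prop :=
  ∀ x y, 1 ≤ μ x y → p x ≤ p y → f x ≤ f y

def IsDownwardClosed (μ : Fin (n + 1) → Fin (n + 1) → ℕ) (p : Fin (n + 1) → ℝ)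
    (D : Finset (Fin (n + 1))) : Prop :=
  ∀ x ∈ D, ∀ y, 1 ≤ μ x y → p y ≤ p x → y ∈ D

theorem EdgeMonotone.add {f g : Fin (n + 1) → ℝ} (hf : EdgeMonotone μ p f)
    (hg : EdgeMonotone μ p g) : EdgeMonotone μ p (f + g) :=
  fun x y hμ hle => add_le_add (hf x y hμ hle) (hg x y hμ hle)

theorem IsDownwardClosed.edgeMonotone_ite (hsym : ∀ i j, μ i j = μ j i)
    {D : Finset (Fin (n + 1))} (hD : IsDownwardClosed μ p D) {a b : ℝ} (hab : a ≤ b) :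
    EdgeMonotone μ p (fun x => if x ∈ D then a else b) := by
  intro x y hμ hle
  dsimp only
  by_cases hy : y ∈ D
  · rw [if_pos (hD y hy x (hsym x y ▸ hμ) hle), if_pos hy]
  · rw [if_neg hy]
    split_ifs
    exacts [hab, le_rfl]

theorem add_smul_mem_openCell (hsym : ∀ i j, μ i j = μ j i) (hp : p ∈ U n)
    {v : Fin (n + 1) → ℝ} (hvl : v (Fin.last n) = 0) (hvs : ∑ x, v x = 0)
    (hv : EdgeMonotone μ p v) {r : ℝ} (hr : 0 ≤ r) : p + r • v ∈ openCell μ p := by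
  have hvs' : ∑ j : Fin n, v j.castSucc = 0 := by
    simpa [Fin.sum_univ_castSucc, hvl] using hvs
  refine ⟨⟨by simp [hp.1, hvl], by simp [sum_add_distrib, ← mul_sum, hp.2, hvs']⟩, ?_⟩
  have hlt : ∀ x y, 1 ≤ μ x y → p x < p y → (p + r • v) x < (p + r • v) y :=
    fun x y hμ h => add_lt_add_of_lt_of_le h (mul_le_mul_of_nonneg_left (hv x y hμ h.le) hr)
  intro x y hμ
  rcases lt_trichotomy (p x) (p y) with h | h | h
  · have hq := hlt x y hμ h
    exact ⟨iff_of_true hq h, iff_of_false hq.ne h.ne⟩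
  · have hq : (p + r • v) x = (p + r • v) y := by
      simp [h, le_antisymm (hv x y hμ h.le) (hv y x (hsym x y ▸ hμ) h.ge)]
    exact ⟨by simp [hq, h], iff_of_true hq h⟩
  · have hq := hlt y x (hsym x y ▸ hμ) h
    exact ⟨iff_of_false hq.not_gt h.not_gt, iff_of_false hq.ne' h.ne'⟩

theorem not_isBounded_openCell_of_isDownwardClosed (hsym : ∀ i j, μ i j = μ j i)
    (hp : p ∈ U n) {D K : Finset (Fin (n + 1))} (hD : IsDownwardClosed μ p D)
    (hK : IsDownwardClosed μ p K) (hlastD : Fin.last n ∉ D) (hlastK : Fin.last n ∈ K)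
    (hDne : D.Nonempty) {x₀ : Fin (n + 1)} (hx₀K : x₀ ∉ K) (hx₀D : x₀ ∉ D) :
    ¬ Bornology.IsBounded (openCell μ p) := by
  have hKc : (0 : ℝ) < #Kᶜ := by exact_mod_cast card_pos.2 ⟨x₀, mem_compl.2 hx₀K⟩
  set t : ℝ := #D / #Kᶜ
  have ht : 0 < t := div_pos (by exact_mod_cast hDne.card_pos) hKc
  set v : Fin (n + 1) → ℝ :=
    (fun x => if x ∈ K then 0 else t) + (fun x => if x ∈ D then -1 else 0)
  have hvs : ∑ x, v x = 0 := by
    simp [v, sum_add_distrib, sum_ite, filter_not, ← compl_eq_univ_sdiff, t,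
      mul_div_cancel₀ _ hKc.ne']
  refine not_isBounded_of_forall_add_smul_mem (x := p) (v := v) (fun h => ?_) fun r hr =>
    add_smul_mem_openCell hsym hp (by simp [v, hlastK, hlastD]) hvs
      ((hK.edgeMonotone_ite hsym ht.le).add (hD.edgeMonotone_ite hsym (by norm_num))) hr
  have hvx₀ := congrFun h x₀
  simp [v, hx₀K, hx₀D] at hvx₀
  linarith

theorem not_isBounded_openCell_of_sink (hsym : ∀ i j, μ i j = μ j i)
    (hconn : ConnectedOn μ Set.univ) (hp : p ∈ U n) {i : Fin (n + 1)}
    (hi : ¬ pEquiv μ p i (Fin.last n))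
    (hsink : ∀ i' j, pEquiv μ p i i' → 1 ≤ μ i' j → p i' ≤ p j) :
    ¬ Bornology.IsBounded (openCell μ p) := by
  classical
  set D := univ.filter (pEquiv μ p i)
  set K :=
    univ.filter (Relation.ReflTransGen (fun a b => 1 ≤ μ a b ∧ p b ≤ p a) (Fin.last n))
  have hD : IsDownwardClosed μ p D := by
    intro x hx y hμ hle
    simp only [D, mem_filter, mem_univ, true_and] at hx ⊢
    exact hx.tail ⟨hμ, le_antisymm (hsink x y hx hμ) hle⟩
  have hK : IsDownwardClosed μ p K := by
    intro x hx y hμ hle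
    simp only [K, mem_filter, mem_univ, true_and] at hx ⊢
    exact hx.tail ⟨hμ, hle⟩
  have hpK : ∀ x ∈ K, p x ≤ 0 := by
    intro x hx
    simp only [K, mem_filter, mem_univ, true_and] at hx
    induction hx with
    | refl => exact hp.1.le
    | tail _ h ih => exact h.2.trans ih
  obtain ⟨x₀, hx₀K, hx₀D⟩ : ∃ x, x ∉ K ∧ x ∉ D := by
    obtain ⟨u, hu, w, hw, -, -, hμ⟩ :=
      (hconn i trivial _ trivial).exists_boundary (s := {x | pEquiv μ p i x}) .refl hi
    have hiw : p i < p w :=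
      hu.apply_eq ▸ (hsink u w hu hμ).lt_of_ne fun h => hw (hu.tail ⟨hμ, h⟩)
    by_contra! hKD
    have hwK : w ∈ K := by_contra fun h => hw (by simpa [D] using hKD w h)
    have hnonpos : ∀ x, p x ≤ 0 := fun x => if hx : x ∈ K then hpK x hx else by
      have hix : p i = p x := (by simpa [D] using hKD x hx : pEquiv μ p i x).apply_eq
      linarith [hpK w hwK]
    have hsum := hp.2 ▸ sum_nonpos fun j _ => hnonpos (Fin.castSucc j)
    norm_num at hsum
  exact not_isBounded_openCell_of_isDownwardClosed hsym hp hD hK (by simpa [D] using hi)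
    (by simpa [K] using .refl) ⟨i, by simpa [D] using .refl⟩ hx₀K hx₀D

end Cells

theorem stmt0_general {n : ℕ} (μ : Fin (n + 1) → Fin (n + 1) → ℕ)
    (hsym : ∀ i j, μ i j = μ j i)
    (hconn : ConnectedOn μ Set.univ)
    (p : Fin (n + 1) → ℝ) (hp : p ∈ U n) :
    Bornology.IsBounded (openCell μ p) ↔
      ∀ i : Fin (n + 1), ¬ pEquiv μ p i (Fin.last n) →
        ∃ i' j : Fin (n + 1), pEquiv μ p i i' ∧ 1 ≤ μ i' j ∧ p j < p i' := by
  refine ⟨fun hB i hi => ?_, isBounded_openCell hsym⟩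
  by_contra! hsink
  exact not_isBounded_openCell_of_sink hsym hconn hp hi hsink hB

/-- `C(p)` is bounded iff every vertex `i` not `p`-equivalent to `n+1`
has a `p`-equivalent vertex `i'` with a neighbour `j` of strictly smaller `p`-value. -/
theorem stmt0 {n : ℕ} (hn : 1 ≤ n) (μ : Fin (n + 1) → Fin (n + 1) → ℕ)
    (hsym : ∀ i j, μ i j = μ j i) (hloop : ∀ i, μ i i = 0)
    (hconn : ConnectedOn μ Set.univ)
    (p : Fin (n + 1) → ℝ) (hp : p ∈ U n) :
    Bornology.IsBounded (openCell μ p) ↔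
      ∀ i : Fin (n + 1), ¬ pEquiv μ p i (Fin.last n) →
        ∃ i' j : Fin (n + 1), pEquiv μ p i i' ∧ 1 ≤ μ i' j ∧ p j < p i' :=
  stmt0_general μ hsym hconn p hp
end

section
/- Let p ∈ U be such that C(p) is bounded, and let i ∈ [n]. Then the set of nonempty subsets I ⊆ [n] such that G[I] and G[V∖I] are both connected and (1/|I|)·e_I ∈ C̄(p) is nonempty, and D_i(p) equals the maximum of ε_I(i) over all such subsets I. (In other words, the monomial label of the bounded cell containing p in its relative interior, defined as the componentwise maximum of the labels ε_I of its 0-cells, has i-th exponent equal to the number of edges ij of G with p_i > p_j.) -/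
open Finset

/-!
If some vertex `j` could not be reached from `n+1` along an edge path on which `p` is
nondecreasing, one finds sets `A ⊆ B`, closed upwards along such edges, with `n+1 ∈ B ∖ A`;
then `C(p)` contains the ray `p + t (|Bᶜ| e_A - |A| e_{Bᶜ})`, `t ≥ 0`, and is unbounded.
Hence in a bounded cell every vertex is reached from `n+1`, so `p ≥ 0`. For `p_i > 0`, the set
`I` of vertices reached from `i` along `p`-nondecreasing paths is admissible, and the edges
leaving it from `i` are exactly those with `p_i > p_j`, so `ε_I(i) = D_i(p)`; for `p_i = 0`
both sides vanish. Conversely `(1/|I|) e_I ∈ C̄(p)` forces `p_j < p_c` on every edge `cj`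
leaving `I`, whence `ε_I(i) ≤ D_i(p)`.
-/

namespace GraphicalArrangement

def UpReach {n : ℕ} (μ : Fin (n + 1) → Fin (n + 1) → ℕ) (p : Fin (n + 1) → ℝ)
    (a b : Fin (n + 1)) : Prop :=
  Relation.ReflTransGen (fun x y => 1 ≤ μ x y ∧ p x ≤ p y) a b

def IsUpClosed {n : ℕ} (μ : Fin (n + 1) → Fin (n + 1) → ℕ) (p : Fin (n + 1) → ℝ)
    (A : Finset (Fin (n + 1))) : Prop :=
  ∀ a b, 1 ≤ μ a b → p a ≤ p b → a ∈ A → b ∈ A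

def EdgeMonotone {n : ℕ} (μ : Fin (n + 1) → Fin (n + 1) → ℕ) (p : Fin (n + 1) → ℝ)
    (v : Fin (n + 1) → ℝ) : Prop :=
  ∀ a b, 1 ≤ μ a b → p a ≤ p b → v a ≤ v b

open Classical in
noncomputable def upSet {n : ℕ} (μ : Fin (n + 1) → Fin (n + 1) → ℕ)
    (p : Fin (n + 1) → ℝ)
    (c : Fin (n + 1)) : Finset (Fin (n + 1)) :=
  univ.filter (UpReach μ p c)

/-- `(1/|I|) e_I` is a 0-cell of the bounded complex lying in `C̄(p)`. -/
def IsVertexOfClosedCell {n : ℕ} (μ : Fin (n + 1) → Fin (n + 1) → ℕ)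
    (p : Fin (n + 1) → ℝ)
    (I : Finset (Fin (n + 1))) : Prop :=
  I.Nonempty ∧ Fin.last n ∉ I ∧ ConnectedOn μ (I : Set (Fin (n + 1))) ∧
    ConnectedOn μ ((I : Set (Fin (n + 1)))ᶜ) ∧ qI I ∈ closedCell μ p

variable {n : ℕ} {μ : Fin (n + 1) → Fin (n + 1) → ℕ} {p : Fin (n + 1) → ℝ}

lemma UpReach.le {a b : Fin (n + 1)} (h : UpReach μ p a b) : p a ≤ p b := by
  induction h with
  | refl => exact le_rfl
  | tail _ hstep ih => exact ih.trans hstep.2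

lemma mem_upSet {c j : Fin (n + 1)} : j ∈ upSet μ p c ↔ UpReach μ p c j := by
  simp [upSet]

lemma self_mem_upSet (c : Fin (n + 1)) : c ∈ upSet μ p c :=
  mem_upSet.2 .refl

lemma isUpClosed_upSet (c : Fin (n + 1)) : IsUpClosed μ p (upSet μ p c) :=
  fun _ _ hμ hp ha => mem_upSet.2 ((mem_upSet.1 ha).tail ⟨hμ, hp⟩)

lemma IsUpClosed.union {A B : Finset (Fin (n + 1))} (hA : IsUpClosed μ p A)
    (hB : IsUpClosed μ p B) : IsUpClosed μ p (A ∪ B) := by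
  intro a b hμ hp hab
  simp only [mem_union] at hab ⊢
  exact hab.imp (hA a b hμ hp) (hB a b hμ hp)

lemma IsUpClosed.inter {A B : Finset (Fin (n + 1))} (hA : IsUpClosed μ p A)
    (hB : IsUpClosed μ p B) : IsUpClosed μ p (A ∩ B) := by
  intro a b hμ hp hab
  simp only [mem_inter] at hab ⊢
  exact ⟨hA a b hμ hp hab.1, hB a b hμ hp hab.2⟩

lemma exists_pos_of_mem_U (hp : p ∈ U n) : ∃ k : Fin n, 0 < p k.castSucc := by
  by_contra! h
  have := hp.2 ▸ sum_nonpos fun k _ => h k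
  norm_num at this

lemma nonneg_of_upReach_last (hp : p ∈ U n) (hR : ∀ j, UpReach μ p (Fin.last n) j)
    (j : Fin (n + 1)) : 0 ≤ p j :=
  hp.1 ▸ (hR j).le

lemma connectedOn_of_forall_reflTransGen (hsym : ∀ i j, μ i j = μ j i)
    {S : Set (Fin (n + 1))} (r : Fin (n + 1))
    (h : ∀ j ∈ S, Relation.ReflTransGen (fun a b => a ∈ S ∧ b ∈ S ∧ 1 ≤ μ a b) r j) :
    ConnectedOn μ S := by
  intro a ha b hb
  refine .trans ?_ (h b hb)
  exact Relation.ReflTransGen.mono (fun x y hxy => ⟨hxy.2.1, hxy.1, hsym x y ▸ hxy.2.2⟩) _ _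
    (Relation.ReflTransGen.swap _ _ (h a ha))

lemma connectedOn_upSet (hsym : ∀ i j, μ i j = μ j i) (c : Fin (n + 1)) :
    ConnectedOn μ (upSet μ p c : Set (Fin (n + 1))) := by
  refine connectedOn_of_forall_reflTransGen hsym c fun j hj => ?_
  have hcj : UpReach μ p c j := mem_upSet.1 hj
  clear hj
  induction hcj with
  | refl => exact .refl
  | @tail b j hcb hbj ih =>
    exact ih.tail ⟨mem_upSet.2 hcb, mem_upSet.2 (hcb.tail hbj), hbj.1⟩

lemma connectedOn_compl_of_isUpClosed (hsym : ∀ i j, μ i j = μ j i)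
    (hR : ∀ j, UpReach μ p (Fin.last n) j) {A : Finset (Fin (n + 1))}
    (hA : IsUpClosed μ p A) : ConnectedOn μ ((A : Set (Fin (n + 1)))ᶜ) := by
  refine connectedOn_of_forall_reflTransGen hsym (Fin.last n) fun j hj => ?_
  have hj' : j ∉ A := hj
  clear hj
  induction hR j with
  | refl => exact .refl
  | @tail b j _ hbj ih =>
    have hb : b ∉ A := fun hb => hj' (hA b j hbj.1 hbj.2 hb)
    exact (ih hb).tail ⟨hb, hj', hbj.1⟩

lemma qI_mem_U {I : Finset (Fin (n + 1))} (hne : I.Nonempty) (hlast : Fin.last n ∉ I) :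
    qI I ∈ U n := by
  have hsum : ∑ x : Fin (n + 1), qI I x = 1 := by
    rw [show qI I = fun x => if x ∈ I then 1 / (I.card : ℝ) else 0 from rfl, sum_ite_mem,
      univ_inter, sum_const, nsmul_eq_mul, mul_one_div,
      div_self (by exact_mod_cast hne.card_pos.ne')]
  rw [Fin.sum_univ_castSucc] at hsum
  exact ⟨if_neg hlast, by simpa [qI, hlast] using hsum⟩

lemma qI_mem_closedCell (hsym : ∀ i j, μ i j = μ j i) {A : Finset (Fin (n + 1))}
    (hA : IsUpClosed μ p A) (hne : A.Nonempty) (hlast : Fin.last n ∉ A) :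
    qI A ∈ closedCell μ p := by
  refine ⟨qI_mem_U hne hlast, fun a b hμ => ⟨fun hab => ?_, fun hab => ?_⟩⟩
  · by_cases ha : a ∈ A
    · simp [qI, ha, hA a b hμ hab.le ha]
    · simp only [qI, ha, if_false]
      split_ifs <;> positivity
  · have hiff : a ∈ A ↔ b ∈ A :=
      ⟨hA a b hμ hab.le, hA b a (hsym a b ▸ hμ) hab.ge⟩
    simp only [qI, hiff]

lemma lt_of_qI_mem_closedCell {I : Finset (Fin (n + 1))} (hne : I.Nonempty)
    (hcl : qI I ∈ closedCell μ p) {c j : Fin (n + 1)} (hc : c ∈ I) (hj : j ∉ I)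
    (hμ : 1 ≤ μ c j) : p j < p c := by
  have hpos : (0 : ℝ) < 1 / (I.card : ℝ) := by
    have := hne.card_pos
    positivity
  have hqc : qI I c = 1 / (I.card : ℝ) := if_pos hc
  have hqj : qI I j = 0 := if_neg hj
  rcases lt_trichotomy (p j) (p c) with h | h | h
  · exact h
  · linarith [hqc ▸ hqj ▸ (hcl.2 c j hμ).2 h.symm]
  · linarith [hqc ▸ hqj ▸ (hcl.2 c j hμ).1 h]

lemma isVertexOfClosedCell_upSet (hsym : ∀ i j, μ i j = μ j i) (hp : p ∈ U n)
    (hR : ∀ j, UpReach μ p (Fin.last n) j) {c : Fin (n + 1)} (hc : 0 < p c) :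
    IsVertexOfClosedCell μ p (upSet μ p c) := by
  have hlast : Fin.last n ∉ upSet μ p c := fun h => by
    linarith [hp.1 ▸ (mem_upSet.1 h).le]
  exact ⟨⟨c, self_mem_upSet c⟩, hlast, connectedOn_upSet hsym c,
    connectedOn_compl_of_isUpClosed hsym hR (isUpClosed_upSet c),
    qI_mem_closedCell hsym (isUpClosed_upSet c) ⟨c, self_mem_upSet c⟩ hlast⟩

lemma lt_iff_lt_and_eq_iff_eq_of_imp {x y x' y' : ℝ} (hlt : x < y → x' < y')
    (heq : x = y → x' = y') (hgt : y < x → y' < x') :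
    (x' < y' ↔ x < y) ∧ (x' = y' ↔ x = y) := by
  rcases lt_trichotomy x y with h | h | h
  · have := hlt h
    constructor <;> constructor <;> intro <;> linarith
  · have := heq h
    constructor <;> constructor <;> intro <;> linarith
  · have := hgt h
    constructor <;> constructor <;> intro <;> linarith

lemma add_smul_mem_openCell (hsym : ∀ i j, μ i j = μ j i) (hp : p ∈ U n)
    {v : Fin (n + 1) → ℝ} (hv : EdgeMonotone μ p v) (hvlast : v (Fin.last n) = 0)
    (hvsum : ∑ k : Fin n, v k.castSucc = 0) {t : ℝ} (ht : 0 ≤ t) :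
    p + t • v ∈ openCell μ p := by
  refine ⟨⟨by simp [hp.1, hvlast], by simp [sum_add_distrib, ← mul_sum, hvsum, hp.2]⟩,
    fun a b hμ => ?_⟩
  have hμ' : 1 ≤ μ b a := hsym a b ▸ hμ
  simp only [Pi.add_apply, Pi.smul_apply, smul_eq_mul]
  refine lt_iff_lt_and_eq_iff_eq_of_imp (fun h => ?_) (fun h => ?_) (fun h => ?_)
  · nlinarith [hv a b hμ h.le]
  · rw [h, le_antisymm (hv a b hμ h.le) (hv b a hμ' h.ge)]
  · nlinarith [hv b a hμ' h.le]

lemma not_isBounded_openCell_of_edgeMonotone (hsym : ∀ i j, μ i j = μ j i) (hp : p ∈ U n)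
    {v : Fin (n + 1) → ℝ} (hv : EdgeMonotone μ p v) (hvlast : v (Fin.last n) = 0)
    (hvsum : ∑ k : Fin n, v k.castSucc = 0) (hv0 : v ≠ 0) :
    ¬ Bornology.IsBounded (openCell μ p) := by
  intro hbd
  obtain ⟨C, hC⟩ := isBounded_iff_forall_norm_le.1 hbd
  have hvpos : 0 < ‖v‖ := norm_pos_iff.2 hv0
  have hCp : ‖p‖ ≤ C := by
    simpa using hC _ (add_smul_mem_openCell hsym hp hv hvlast hvsum le_rfl)
  set t := (C + ‖p‖ + 1) / ‖v‖
  have ht : 0 ≤ t := div_nonneg (by linarith [norm_nonneg p]) hvpos.le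
  have htv : t * ‖v‖ = C + ‖p‖ + 1 := div_mul_cancel₀ _ hvpos.ne'
  have hray := hC _ (add_smul_mem_openCell hsym hp hv hvlast hvsum ht)
  have : ‖t • v‖ ≤ ‖p + t • v‖ + ‖p‖ := by
    simpa using norm_sub_le (p + t • v) p
  rw [norm_smul, Real.norm_of_nonneg ht] at this
  linarith

lemma not_isBounded_openCell_of_subset (hsym : ∀ i j, μ i j = μ j i) (hp : p ∈ U n)
    {A B : Finset (Fin (n + 1))} (hA : IsUpClosed μ p A) (hB : IsUpClosed μ p B) (hAB : A ⊆ B)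
    (hAne : A.Nonempty) (hBne : Bᶜ.Nonempty) (hlA : Fin.last n ∉ A) (hlB : Fin.last n ∈ B) :
    ¬ Bornology.IsBounded (openCell μ p) := by
  set v : Fin (n + 1) → ℝ :=
    fun x => (if x ∈ A then (Bᶜ.card : ℝ) else 0) - (if x ∈ Bᶜ then (A.card : ℝ) else 0)
  have hApos : (0 : ℝ) < A.card := by exact_mod_cast hAne.card_pos
  have hBpos : (0 : ℝ) < Bᶜ.card := by exact_mod_cast hBne.card_pos
  have hvlast : v (Fin.last n) = 0 := by simp [v, hlA, hlB]
  have hv : EdgeMonotone μ p v := by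
    intro a b hμ hab
    have hAab := hA a b hμ hab
    have hBab := hB a b hμ hab
    simp only [v, mem_compl]
    split_ifs <;> simp_all
    linarith
  have hvsum : ∑ k : Fin n, v k.castSucc = 0 := by
    have hall : ∑ x, v x = 0 := by
      simp only [v, sum_sub_distrib, sum_ite_mem, univ_inter, sum_const, nsmul_eq_mul]
      ring
    rwa [Fin.sum_univ_castSucc, hvlast, add_zero] at hall
  obtain ⟨a, ha⟩ := hAne
  have hva : v a = Bᶜ.card := by
    simp only [v, if_pos ha, mem_compl, hAB ha, not_true, if_false, sub_zero]
  have hv0 : v ≠ 0 := fun h => hBpos.ne' (hva ▸ congrFun h a)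
  exact not_isBounded_openCell_of_edgeMonotone hsym hp hv hvlast hvsum hv0

lemma not_isBounded_openCell_of_isUpClosed (hsym : ∀ i j, μ i j = μ j i)
    (hconn : ConnectedOn μ Set.univ) (hp : p ∈ U n)
    {A B : Finset (Fin (n + 1))} (hA : IsUpClosed μ p A) (hB : IsUpClosed μ p B)
    (hAne : A.Nonempty) (hBne : Bᶜ.Nonempty) (hlA : Fin.last n ∉ A) (hlB : Fin.last n ∈ B) :
    ¬ Bornology.IsBounded (openCell μ p) := by
  by_cases hunion : (A ∪ B)ᶜ.Nonempty
  · exact not_isBounded_openCell_of_subset hsym hp hA (hA.union hB) subset_union_left hAne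
      hunion hlA (mem_union_right _ hlB)
  by_cases hinter : (A ∩ B).Nonempty
  · exact not_isBounded_openCell_of_subset hsym hp (hA.inter hB) hB inter_subset_right hinter
      hBne (fun h => hlA (mem_inter.1 h).1) hlB
  -- Otherwise `B = Aᶜ`, so `A` is closed under all edges, contradicting connectivity.
  exfalso
  have hcompl : ∀ x, x ∈ A ↔ x ∉ B := fun x => by
    simp only [not_nonempty_iff_eq_empty, compl_eq_empty_iff, eq_univ_iff_forall,
      mem_union, ← disjoint_iff_inter_eq_empty, disjoint_left] at hunion hinter
    exact ⟨@hinter x, (hunion x).resolve_right⟩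
  have hstep : ∀ a b, 1 ≤ μ a b → a ∈ A → b ∈ A := by
    intro a b hμ ha
    rcases le_total (p a) (p b) with hab | hba
    · exact hA a b hμ hab ha
    · exact (hcompl b).2 fun hb => (hcompl a).1 ha (hB b a (hsym a b ▸ hμ) hba hb)
  obtain ⟨a, ha⟩ := hAne
  suffices ∀ {x y},
      Relation.ReflTransGen (fun a b => a ∈ Set.univ ∧ b ∈ Set.univ ∧ 1 ≤ μ a b) x y →
        x ∈ A → y ∈ A from
    hlA (this (hconn a trivial (Fin.last n) trivial) ha)
  intro x y hxy
  induction hxy with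
  | refl => exact id
  | tail _ hyz ih => exact fun hx => hstep _ _ hyz.2.2 (ih hx)

lemma upReach_last (hsym : ∀ i j, μ i j = μ j i) (hconn : ConnectedOn μ Set.univ)
    (hp : p ∈ U n) (hbd : Bornology.IsBounded (openCell μ p)) (j : Fin (n + 1)) :
    UpReach μ p (Fin.last n) j := by
  classical
  by_contra hj
  obtain ⟨w, hw⟩ := exists_pos_of_mem_U hp
  have hB : IsUpClosed μ p (univ.filter fun k => ¬ UpReach μ p k j) := by
    intro a b hμ hab
    simp only [mem_filter, mem_univ, true_and]
    exact fun ha hb => ha (hb.head ⟨hμ, hab⟩)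
  refine not_isBounded_openCell_of_isUpClosed hsym hconn hp (isUpClosed_upSet w.castSucc) hB
    ⟨_, self_mem_upSet _⟩ ⟨j, by simpa using .refl⟩ (fun h => ?_) (by simpa using hj) hbd
  linarith [hp.1 ▸ (mem_upSet.1 h).le]

lemma epsI_le_Dlab {I : Finset (Fin (n + 1))} (hne : I.Nonempty)
    (hcl : qI I ∈ closedCell μ p) (i : Fin n) : epsI μ I i.castSucc ≤ Dlab μ p i := by
  classical
  unfold epsI
  split_ifs with hi
  · rw [dI, Dlab, ← sum_filter_ne_zero]
    refine sum_le_sum_of_subset fun j hj => ?_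
    simp only [mem_filter, mem_compl, mem_univ, true_and] at hj ⊢
    exact lt_of_qI_mem_closedCell hne hcl hi hj.1 (Nat.one_le_iff_ne_zero.2 hj.2)
  · exact Nat.zero_le _

lemma epsI_upSet_self (c : Fin (n + 1)) :
    epsI μ (upSet μ p c) c = ∑ j ∈ univ.filter (fun j => p j < p c), μ c j := by
  classical
  rw [epsI, if_pos (self_mem_upSet c), dI, ← sum_filter_ne_zero,
    ← sum_filter_ne_zero (univ.filter _)]
  congr 1
  ext j
  simp only [mem_filter, mem_compl, mem_univ, true_and, and_congr_left_iff, mem_upSet]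
  intro hμ
  constructor
  · exact fun hj => lt_of_not_ge fun h => hj (.single ⟨Nat.one_le_iff_ne_zero.2 hμ, h⟩)
  · exact fun hlt hj => (hj.le).not_gt hlt

lemma Dlab_eq_zero {i : Fin n} (hi : ∀ j, p i.castSucc ≤ p j) : Dlab μ p i = 0 :=
  sum_eq_zero fun j hj => absurd (mem_filter.1 hj).2 (hi j).not_gt

end GraphicalArrangement

open GraphicalArrangement in
theorem stmt3_general {n : ℕ} (μ : Fin (n + 1) → Fin (n + 1) → ℕ)
    (hsym : ∀ i j, μ i j = μ j i)
    (hconn : ConnectedOn μ Set.univ)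
    (p : Fin (n + 1) → ℝ) (hp : p ∈ U n)
    (hbd : Bornology.IsBounded (openCell μ p)) (i : Fin n) :
    (∃ I : Finset (Fin (n + 1)), I.Nonempty ∧ Fin.last n ∉ I ∧
        ConnectedOn μ (I : Set (Fin (n + 1))) ∧
        ConnectedOn μ ((I : Set (Fin (n + 1)))ᶜ) ∧ qI I ∈ closedCell μ p) ∧
    IsGreatest {c : ℕ | ∃ I : Finset (Fin (n + 1)), I.Nonempty ∧ Fin.last n ∉ I ∧
        ConnectedOn μ (I : Set (Fin (n + 1))) ∧
        ConnectedOn μ ((I : Set (Fin (n + 1)))ᶜ) ∧ qI I ∈ closedCell μ p ∧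
        c = epsI μ I i.castSucc}
      (Dlab μ p i) := by
  have hR := upReach_last hsym hconn hp hbd
  have hnonneg := nonneg_of_upReach_last hp hR
  obtain ⟨k, hk⟩ := exists_pos_of_mem_U hp
  obtain ⟨hk₁, hk₂, hk₃, hk₄, hk₅⟩ := isVertexOfClosedCell_upSet hsym hp hR hk
  refine ⟨⟨_, hk₁, hk₂, hk₃, hk₄, hk₅⟩, ?_, ?_⟩
  · rcases (hnonneg i.castSucc).lt_or_eq with hi | hi
    · obtain ⟨h₁, h₂, h₃, h₄, h₅⟩ := isVertexOfClosedCell_upSet hsym hp hR hi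
      exact ⟨_, h₁, h₂, h₃, h₄, h₅, (epsI_upSet_self _).symm⟩
    · have hik : i.castSucc ∉ upSet μ p k.castSucc := fun h => by
        linarith [(mem_upSet.1 h).le]
      refine ⟨_, hk₁, hk₂, hk₃, hk₄, hk₅, ?_⟩
      rw [Dlab_eq_zero fun j => hi ▸ hnonneg j, epsI, if_neg hik]
  · rintro _ ⟨I, hne, -, -, -, hcl, rfl⟩
    exact epsI_le_Dlab hne hcl i

/-- for bounded `C(p)` and `i ∈ [n]`, the 0-cells `(1/|I|)e_I` of the
bounded complex lying in the closed cell of `p` form a nonempty family, and `D_i(p)`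
is the maximum of `ε_I(i)` over this family. -/
theorem stmt3 {n : ℕ} (hn : 1 ≤ n) (μ : Fin (n + 1) → Fin (n + 1) → ℕ)
    (hsym : ∀ i j, μ i j = μ j i) (hloop : ∀ i, μ i i = 0)
    (hconn : ConnectedOn μ Set.univ)
    (p : Fin (n + 1) → ℝ) (hp : p ∈ U n)
    (hbd : Bornology.IsBounded (openCell μ p)) (i : Fin n) :
    (∃ I : Finset (Fin (n + 1)), I.Nonempty ∧ Fin.last n ∉ I ∧
        ConnectedOn μ (I : Set (Fin (n + 1))) ∧
        ConnectedOn μ ((I : Set (Fin (n + 1)))ᶜ) ∧ qI I ∈ closedCell μ p) ∧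
    IsGreatest {c : ℕ | ∃ I : Finset (Fin (n + 1)), I.Nonempty ∧ Fin.last n ∉ I ∧
        ConnectedOn μ (I : Set (Fin (n + 1))) ∧
        ConnectedOn μ ((I : Set (Fin (n + 1)))ᶜ) ∧ qI I ∈ closedCell μ p ∧
        c = epsI μ I i.castSucc}
      (Dlab μ p i) :=
  stmt3_general μ hsym hconn p hp hbd i
end

section
/- Let σ : [n] → ℕ and set S_σ := { p ∈ U : C(p) is bounded and D_i(p) ≤ σ(i) for all i ∈ [n] }. If S_σ is nonempty, then there exists a nonempty subset I ⊆ [n] such that the point q := (1/|I|)·e_I lies in S_σ and S_σ is star-shaped with respect to q, i.e., for every r ∈ S_σ the closed line segment from q to r is contained in S_σ. -/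
open Finset

namespace Stmt4Aux
variable {n : ℕ}

/-- one descending step along an edge -/
def Rel (μ : Fin (n + 1) → Fin (n + 1) → ℕ) (x : Fin (n + 1) → ℝ) (a b : Fin (n + 1)) : Prop :=
  1 ≤ μ a b ∧ x b ≤ x a

/-- every vertex has a non-increasing walk to the last vertex -/
def Pp (μ : Fin (n + 1) → Fin (n + 1) → ℕ) (x : Fin (n + 1) → ℝ) : Prop :=
  ∀ i, Relation.ReflTransGen (Rel μ x) i (Fin.last n)

theorem le_of_path {μ : Fin (n + 1) → Fin (n + 1) → ℕ} {x : Fin (n + 1) → ℝ}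
    {a b : Fin (n + 1)} (h : Relation.ReflTransGen (Rel μ x) a b) : x b ≤ x a := by
  induction h with
  | refl => exact le_rfl
  | tail _ h2 ih => exact h2.2.trans ih

theorem nonneg_of_Pp {μ : Fin (n + 1) → Fin (n + 1) → ℕ} {x : Fin (n + 1) → ℝ}
    (hU : x ∈ U n) (hP : Pp μ x) (v : Fin (n + 1)) : 0 ≤ x v := by
  have h := le_of_path (hP v)
  rw [hU.1] at h
  exact h

theorem sum_all {x : Fin (n + 1) → ℝ} (hU : x ∈ U n) : ∑ j : Fin (n + 1), x j = 1 := by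
  rw [Fin.sum_univ_castSucc, hU.1, hU.2, add_zero]

theorem self_mem_openCell {μ : Fin (n + 1) → Fin (n + 1) → ℕ} {r : Fin (n + 1) → ℝ}
    (hU : r ∈ U n) : r ∈ openCell μ r :=
  ⟨hU, fun _ _ _ => ⟨Iff.rfl, Iff.rfl⟩⟩

theorem cell_le {μ : Fin (n + 1) → Fin (n + 1) → ℕ} (hsym : ∀ i j, μ i j = μ j i)
    {r x : Fin (n + 1) → ℝ}
    (hx : x ∈ openCell μ r) {a b : Fin (n + 1)} (hμ : 1 ≤ μ a b) (h : r b ≤ r a) :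
    x b ≤ x a := by
  have hμ' : 1 ≤ μ b a := by rw [hsym]; exact hμ
  rcases lt_or_eq_of_le h with h' | h'
  · exact le_of_lt (((hx.2 b a hμ').1).mpr h')
  · exact le_of_eq (((hx.2 a b hμ).2).mpr h'.symm).symm

theorem cell_nonneg {μ : Fin (n + 1) → Fin (n + 1) → ℕ} (hsym : ∀ i j, μ i j = μ j i)
    {r x : Fin (n + 1) → ℝ}
    (hP : Pp μ r) (hx : x ∈ openCell μ r) (v : Fin (n + 1)) : 0 ≤ x v := by
  have key : ∀ a b : Fin (n + 1), Relation.ReflTransGen (Rel μ r) a b → x b ≤ x a := by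
    intro a b h
    induction h with
    | refl => exact le_rfl
    | tail _ h2 ih => exact (cell_le hsym hx h2.1 h2.2).trans ih
  have h := key v (Fin.last n) (hP v)
  rw [hx.1.1] at h
  exact h

theorem isBounded_of_Pp {μ : Fin (n + 1) → Fin (n + 1) → ℕ} (hsym : ∀ i j, μ i j = μ j i)
    {r : Fin (n + 1) → ℝ}
    (hP : Pp μ r) : Bornology.IsBounded (openCell μ r) := by
  refine (Metric.isBounded_closedBall (x := (0 : Fin (n + 1) → ℝ)) (r := 1)).subset ?_
  intro x hx
  rw [Metric.mem_closedBall, dist_zero_right]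
  have hnn := cell_nonneg hsym hP hx
  have hle1 : ∀ v, x v ≤ 1 := by
    intro v
    induction v using Fin.lastCases with
    | last => rw [hx.1.1]; exact zero_le_one
    | cast i =>
      have h1 : x i.castSucc ≤ ∑ j : Fin n, x j.castSucc :=
        Finset.single_le_sum (fun j _ => hnn j.castSucc) (Finset.mem_univ i)
      rw [hx.1.2] at h1
      exact h1
  refine (pi_norm_le_iff_of_nonneg zero_le_one).mpr fun v => ?_
  rw [Real.norm_eq_abs, abs_le]
  exact ⟨by linarith [hnn v], hle1 v⟩

theorem Pp_of_isBounded {μ : Fin (n + 1) → Fin (n + 1) → ℕ} (hsym : ∀ i j, μ i j = μ j i)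
    (hconn : ConnectedOn μ Set.univ) {r : Fin (n + 1) → ℝ} (hU : r ∈ U n)
    (hB : Bornology.IsBounded (openCell μ r)) : Pp μ r := by
  classical
  by_contra hP
  rw [Pp] at hP
  push_neg at hP
  obtain ⟨i₀, hi₀⟩ := hP
  set G : Fin (n + 1) → Prop := fun j => Relation.ReflTransGen (Rel μ r) j (Fin.last n) with hG
  set Lc : Finset (Fin (n + 1)) := Finset.univ.filter (fun j => ¬ G j) with hLc
  have hlastG : G (Fin.last n) := Relation.ReflTransGen.refl
  have hi₀Lc : i₀ ∈ Lc := by simp [hLc, hG, hi₀]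
  have hm : 0 < Lc.card := Finset.card_pos.mpr ⟨i₀, hi₀Lc⟩
  set m : ℝ := (Lc.card : ℝ) with hmdef
  have hmpos : 0 < m := by rw [hmdef]; exact_mod_cast hm
  -- the recession direction
  set v : Fin (n + 1) → ℝ := fun j => m * r j - (if G j then 0 else 1) with hv
  -- cross edges go strictly up from non-G to G
  have hcross : ∀ a b : Fin (n + 1), ¬ G a → G b → 1 ≤ μ a b → r a < r b := by
    intro a b ha hb hμ
    by_contra h
    push_neg at h
    exact ha (Relation.ReflTransGen.head ⟨hμ, h⟩ hb)
  have hvlast : v (Fin.last n) = 0 := by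
    simp [hv, hlastG, hU.1]
  have hvsum : ∑ i : Fin n, v i.castSucc = 0 := by
    have h1 : ∑ j : Fin (n + 1), v j = 0 := by
      have : ∑ j : Fin (n + 1), v j
          = m * (∑ j : Fin (n + 1), r j) - ∑ j : Fin (n + 1), (if G j then (0:ℝ) else 1) := by
        rw [Finset.mul_sum, ← Finset.sum_sub_distrib]
      rw [this, sum_all hU, mul_one]
      have h2 : ∑ j : Fin (n + 1), (if G j then (0:ℝ) else 1) = m := by
        rw [Finset.sum_ite, Finset.sum_const, Finset.sum_const]
        simp [hLc, hmdef]
      rw [h2, sub_self]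
    have h3 := Fin.sum_univ_castSucc (f := v)
    rw [h1, hvlast, add_zero] at h3
    exact h3.symm
  -- the ray stays in the open cell
  have hray : ∀ t : ℝ, 0 ≤ t → r + t • v ∈ openCell μ r := by
    intro t ht
    have hcoef : (0:ℝ) < 1 + t * m := by nlinarith
    constructor
    · constructor
      · simp [Pi.add_apply, hU.1, hvlast]
      · have : ∑ i : Fin n, (r + t • v) i.castSucc
            = ∑ i : Fin n, r i.castSucc + t * ∑ i : Fin n, v i.castSucc := by
          rw [Finset.mul_sum, ← Finset.sum_add_distrib]
          refine Finset.sum_congr rfl fun i _ => ?_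
          simp [Pi.add_apply, Pi.smul_apply, smul_eq_mul]
        rw [this, hU.2, hvsum, mul_zero, add_zero]
    · intro a b hμ
      have hμ' : 1 ≤ μ b a := by rw [hsym]; exact hμ
      have hdiff : ∀ c d : Fin (n + 1), (r + t • v) d - (r + t • v) c
          = (1 + t * m) * (r d - r c)
            - t * ((if G d then (0:ℝ) else 1) - (if G c then (0:ℝ) else 1)) := by
        intro c d
        simp only [Pi.add_apply, Pi.smul_apply, smul_eq_mul, hv]
        ring
      have key : ∀ c d : Fin (n + 1),
          ((if G c then (0:ℝ) else 1) = (if G d then 0 else 1)) →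
          (((r + t • v) c < (r + t • v) d ↔ r c < r d) ∧
           ((r + t • v) c = (r + t • v) d ↔ r c = r d)) := by
        intro c d hcd
        have h1 : (r + t • v) d - (r + t • v) c = (1 + t * m) * (r d - r c) := by
          rw [hdiff c d, hcd]; ring
        constructor
        · rw [← sub_pos, h1, ← sub_pos (a := r d) (b := r c)]
          exact mul_pos_iff_of_pos_left hcoef
        · constructor
          · intro h
            have h0 : (1 + t * m) * (r d - r c) = 0 := by rw [← h1, h, sub_self]
            rcases mul_eq_zero.mp h0 with h' | h'
            · exact absurd h' (ne_of_gt hcoef)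
            · linarith [sub_eq_zero.mp h']
          · intro h
            have hz : r d - r c = 0 := by rw [h, sub_self]
            have h0 : (r + t • v) d - (r + t • v) c = 0 := by rw [h1, hz, mul_zero]
            linarith
      by_cases hGa : G a <;> by_cases hGb : G b
      · exact key a b (by simp [hGa, hGb])
      · -- a in G, b not : r b < r a
        have hlt : r b < r a := hcross b a hGb hGa hμ'
        have h1 : (r + t • v) b - (r + t • v) a = (1 + t * m) * (r b - r a) - t := by
          rw [hdiff a b]; simp [hGa, hGb]
        have hlt' : (r + t • v) b < (r + t • v) a := by nlinarith
        constructor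
        · constructor
          · intro h; exact absurd h (not_lt.mpr hlt'.le)
          · intro h; exact absurd h (not_lt.mpr hlt.le)
        · constructor
          · intro h; exact absurd h (ne_of_gt hlt')
          · intro h; exact absurd h (ne_of_gt hlt)
      · have hlt : r a < r b := hcross a b hGa hGb hμ
        have h1 : (r + t • v) a - (r + t • v) b = (1 + t * m) * (r a - r b) - t := by
          rw [hdiff b a]; simp [hGa, hGb]
        have hlt' : (r + t • v) a < (r + t • v) b := by nlinarith
        constructor
        · exact ⟨fun _ => hlt, fun _ => hlt'⟩
        · constructor
          · intro h; exact absurd h (ne_of_lt hlt')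
          · intro h; exact absurd h (ne_of_lt hlt)
      · exact key a b (by simp [hGa, hGb])
  -- v is nonzero
  have hvne : ∃ j, v j ≠ 0 := by
    by_contra h
    push_neg at h
    have hrG : ∀ j, G j → r j = 0 := by
      intro j hj
      have := h j
      simp only [hv, hj, if_pos, sub_zero] at this
      rcases mul_eq_zero.mp this with h' | h'
      · exact absurd h' (ne_of_gt hmpos)
      · exact h'
    have hrLc : ∀ j, ¬ G j → r j = 1 / m := by
      intro j hj
      have := h j
      simp only [hv, hj, if_neg, not_false_iff] at this
      field_simp at this ⊢
      linarith
    -- find a cross edge from a walk i₀ → last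
    have hwalk := hconn i₀ (Set.mem_univ _) (Fin.last n) (Set.mem_univ _)
    have hfind : ∀ a : Fin (n + 1),
        Relation.ReflTransGen (fun a b => a ∈ Set.univ ∧ b ∈ Set.univ ∧ 1 ≤ μ a b) a (Fin.last n) →
        ¬ G a → ∃ p q : Fin (n + 1), ¬ G p ∧ G q ∧ 1 ≤ μ p q := by
      intro a hwalk
      induction hwalk using Relation.ReflTransGen.head_induction_on with
      | refl => intro hc; exact absurd hlastG hc
      | head hstep _ ih =>
        rename_i x y _
        intro hx
        by_cases hy : G y
        · exact ⟨x, y, hx, hy, hstep.2.2⟩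
        · exact ih hy
    obtain ⟨p, q, hp, hq, hpq⟩ := hfind i₀ hwalk hi₀
    have hlt := hcross p q hp hq hpq
    rw [hrLc p hp, hrG q hq] at hlt
    have h1m : (0:ℝ) < 1 / m := by positivity
    linarith
  obtain ⟨j₀, hj₀⟩ := hvne
  -- contradiction with boundedness
  obtain ⟨C, hC⟩ := Metric.isBounded_iff.mp hB
  set t : ℝ := (C + 1) / |v j₀| with htdef
  have habs : 0 < |v j₀| := abs_pos.mpr hj₀
  have hCnn : 0 ≤ C := by
    have := hC (self_mem_openCell (μ := μ) hU) (self_mem_openCell (μ := μ) hU)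
    simpa using this
  have ht : 0 ≤ t := by positivity
  have hmem := hray t ht
  have hd := hC (self_mem_openCell (μ := μ) hU) hmem
  rw [dist_self_add_right] at hd
  have hge : |t| * |v j₀| ≤ ‖t • v‖ := by
    have h := norm_le_pi_norm (t • v) j₀
    simpa [Real.norm_eq_abs, Pi.smul_apply, smul_eq_mul, abs_mul] using h
  have heq : |t| * |v j₀| = C + 1 := by
    rw [abs_of_nonneg ht, htdef]
    field_simp
  linarith
/-- the combinatorial version of `S_σ` -/
def Sp (μ : Fin (n + 1) → Fin (n + 1) → ℕ) (σ : Fin n → ℕ) : Set (Fin (n + 1) → ℝ) :=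
  {r | r ∈ U n ∧ Pp μ r ∧ ∀ i, Dlab μ r i ≤ σ i}

/-- vertices where every member of `S_σ` vanishes -/
def Wz (μ : Fin (n + 1) → Fin (n + 1) → ℕ) (σ : Fin n → ℕ) : Set (Fin (n + 1)) :=
  {v | ∀ r ∈ Sp μ σ, r v = 0}

/-- `c` is connected to the last vertex inside `Wz` -/
def connW (μ : Fin (n + 1) → Fin (n + 1) → ℕ) (σ : Fin n → ℕ) (c : Fin (n + 1)) : Prop :=
  Relation.ReflTransGen (fun a b => 1 ≤ μ a b ∧ a ∈ Wz μ σ ∧ b ∈ Wz μ σ) c (Fin.last n)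

variable {μ : Fin (n + 1) → Fin (n + 1) → ℕ} {σ : Fin n → ℕ}

theorem last_mem_Wz : Fin.last n ∈ Wz μ σ := fun _ hr => hr.1.1

theorem connW_last : connW μ σ (Fin.last n) := Relation.ReflTransGen.refl

theorem mem_Wz_of_connW {c : Fin (n + 1)} (h : connW μ σ c) : c ∈ Wz μ σ := by
  rcases Relation.ReflTransGen.cases_head h with h' | ⟨b, hb, _⟩
  · rw [h']; exact last_mem_Wz
  · exact hb.2.1

theorem pos_of_not_Wz {v : Fin (n + 1)} (hv : v ∉ Wz μ σ) :
    ∃ r ∈ Sp μ σ, 0 < r v := by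
  rw [Wz, Set.mem_setOf_eq] at hv
  push_neg at hv
  obtain ⟨r, hr, hrv⟩ := hv
  exact ⟨r, hr, lt_of_le_of_ne (nonneg_of_Pp hr.1 hr.2.1 v) (Ne.symm hrv)⟩

/-- a zero vertex has an all-zero walk to the last vertex -/
theorem zero_path {r : Fin (n + 1) → ℝ} (hU : r ∈ U n) (hP : Pp μ r)
    {c : Fin (n + 1)} (hc : r c = 0) :
    Relation.ReflTransGen (fun a b => 1 ≤ μ a b ∧ r a = 0 ∧ r b = 0) c (Fin.last n) := by
  have hnn := nonneg_of_Pp hU hP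
  have key : ∀ a, Relation.ReflTransGen (Rel μ r) a (Fin.last n) → r a = 0 →
      Relation.ReflTransGen (fun a b => 1 ≤ μ a b ∧ r a = 0 ∧ r b = 0) a (Fin.last n) := by
    intro a h
    induction h using Relation.ReflTransGen.head_induction_on with
    | refl => intro _; exact Relation.ReflTransGen.refl
    | head hstep _ ih =>
      rename_i x y _
      intro hx
      have hy : r y = 0 := le_antisymm (hx ▸ hstep.2) (hnn y)
      exact Relation.ReflTransGen.head ⟨hstep.1, hx, hy⟩ (ih hy)
  exact key c (hP c) hc

/-- building a non-increasing walk for a mixture supported on the complement of `Wz` -/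
theorem Pp_mix (hconnall : ∀ c ∈ Wz μ σ, connW μ σ c) {r x : Fin (n + 1) → ℝ}
    (hr : r ∈ Sp μ σ) (hx0 : ∀ v ∈ Wz μ σ, x v = 0) (hxnn : ∀ v, 0 ≤ x v)
    (hmono : ∀ v w, v ∉ Wz μ σ → w ∉ Wz μ σ → r w ≤ r v → x w ≤ x v) : Pp μ x := by
  have hWpath : ∀ a, connW μ σ a → Relation.ReflTransGen (Rel μ x) a (Fin.last n) := by
    intro a h
    induction h using Relation.ReflTransGen.head_induction_on with
    | refl => exact Relation.ReflTransGen.refl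
    | head hstep _ ih =>
      rename_i p w _
      exact Relation.ReflTransGen.head
        ⟨hstep.1, by rw [hx0 p hstep.2.1, hx0 w hstep.2.2]⟩ ih
  intro v
  by_cases hvW : v ∈ Wz μ σ
  · exact hWpath v (hconnall v hvW)
  · have key : ∀ a, Relation.ReflTransGen (Rel μ r) a (Fin.last n) →
        Relation.ReflTransGen (Rel μ x) a (Fin.last n) := by
      intro a h
      induction h using Relation.ReflTransGen.head_induction_on with
      | refl => exact Relation.ReflTransGen.refl
      | head hstep hrest ih =>
        rename_i p w
        by_cases hpW : p ∈ Wz μ σ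
        · exact hWpath p (hconnall p hpW)
        · by_cases hwW : w ∈ Wz μ σ
          · refine Relation.ReflTransGen.head ⟨hstep.1, ?_⟩ (hWpath w (hconnall w hwW))
            rw [hx0 w hwW]; exact hxnn p
          · exact Relation.ReflTransGen.head ⟨hstep.1, hmono p w hpW hwW hstep.2⟩ ih
    exact key v (hr.2.1 v)

open Classical in
/-- every common-zero vertex is connected to the last vertex inside `Wz` -/
theorem connW_all (hne' : (Sp μ σ).Nonempty) : ∀ c ∈ Wz μ σ, connW μ σ c := by
  classical
  intro c hc
  by_contra hcc
  obtain ⟨r, hr⟩ := hne'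
  have hrU := hr.1
  have hrP := hr.2.1
  have hrnn : ∀ v, 0 ≤ r v := nonneg_of_Pp hrU hrP
  -- choose ε below all positive values of r
  have hPosne : (Finset.univ.filter (fun v => 0 < r v)).Nonempty := by
    by_contra h
    rw [Finset.not_nonempty_iff_eq_empty, Finset.filter_eq_empty_iff] at h
    have : ∀ v, r v = 0 := fun v => le_antisymm (not_lt.mp (h (Finset.mem_univ v))) (hrnn v)
    have hs := sum_all hrU
    rw [Finset.sum_congr rfl (fun v _ => this v), Finset.sum_const, smul_zero] at hs
    exact one_ne_zero hs.symm
  set Pos : Finset (Fin (n + 1)) := Finset.univ.filter (fun v => 0 < r v) with hPosdef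
  set ε : ℝ := Pos.inf' hPosne r / 2 with hεdef
  have hinfpos : 0 < Pos.inf' hPosne r := by
    rw [Finset.lt_inf'_iff]
    intro v hv
    exact (Finset.mem_filter.mp hv).2
  have hεpos : 0 < ε := by positivity
  have hεlt : ∀ v, 0 < r v → ε < r v := by
    intro v hv
    have h1 : Pos.inf' hPosne r ≤ r v :=
      Finset.inf'_le r (by simp [hPosdef, hv])
    have h2 : ε < Pos.inf' hPosne r := by
      rw [hεdef]; linarith
    linarith
  -- the lifted set L
  set L : Finset (Fin (n + 1)) := Finset.univ.filter (fun v => r v = 0 ∧ ¬ connW μ σ v)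
    with hLdef
  have hrc : r c = 0 := hc r hr
  have hcL : c ∈ L := by simp [hLdef, hrc, hcc]
  have hlastL : Fin.last n ∉ L := by
    simp only [hLdef, Finset.mem_filter, Finset.mem_univ, true_and, not_and, not_not]
    intro _; exact connW_last
  have hLzero : ∀ v ∈ L, r v = 0 := by
    intro v hv; exact (Finset.mem_filter.mp hv).2.1
  have hLnc : ∀ v ∈ L, ¬ connW μ σ v := by
    intro v hv; exact (Finset.mem_filter.mp hv).2.2
  set c₀ : ℝ := 1 + ε * L.card with hc₀def
  have hc₀pos : 0 < c₀ := by
    have : (0:ℝ) ≤ (L.card : ℝ) := Nat.cast_nonneg _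
    nlinarith
  set ρ : Fin (n + 1) → ℝ := fun v => (r v + if v ∈ L then ε else 0) / c₀ with hρdef
  -- comparison transfer
  have hlt_iff : ∀ a b : Fin (n + 1), (ρ a < ρ b ↔
      r a + (if a ∈ L then ε else 0) < r b + (if b ∈ L then ε else 0)) := by
    intro a b
    exact div_lt_div_iff_of_pos_right hc₀pos
  have hle_iff : ∀ a b : Fin (n + 1), (ρ a ≤ ρ b ↔
      r a + (if a ∈ L then ε else 0) ≤ r b + (if b ∈ L then ε else 0)) := by
    intro a b
    exact div_le_div_iff_of_pos_right hc₀pos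
  -- ρ ∈ U
  have hρlast : ρ (Fin.last n) = 0 := by
    simp [hρdef, hlastL, hrU.1]
  have hρU : ρ ∈ U n := by
    refine ⟨hρlast, ?_⟩
    have h1 : ∑ j : Fin (n + 1), (r j + if j ∈ L then ε else 0) = c₀ := by
      rw [Finset.sum_add_distrib, sum_all hrU, Finset.sum_ite_mem, Finset.univ_inter,
        Finset.sum_const, nsmul_eq_mul, hc₀def]
      ring
    have h2 : ∑ j : Fin (n + 1), ρ j = 1 := by
      rw [hρdef]
      rw [← Finset.sum_div, h1, div_self (ne_of_gt hc₀pos)]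
    have h3 := Fin.sum_univ_castSucc (f := ρ)
    rw [h2, hρlast, add_zero] at h3
    exact h3.symm
  have hρzero : ∀ a, connW μ σ a → ρ a = 0 := by
    intro a ha
    have haW : a ∈ Wz μ σ := mem_Wz_of_connW ha
    have haL : a ∉ L := by
      simp only [hLdef, Finset.mem_filter, Finset.mem_univ, true_and, not_and, not_not]
      intro _; exact ha
    simp [hρdef, haL, haW r hr]
  -- Pp ρ
  have hWpath : ∀ a, connW μ σ a → Relation.ReflTransGen (Rel μ ρ) a (Fin.last n) := by
    intro a h
    induction h using Relation.ReflTransGen.head_induction_on with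
    | refl => exact Relation.ReflTransGen.refl
    | head hstep hrest ih =>
      rename_i p w
      have hpc : connW μ σ p := Relation.ReflTransGen.head hstep hrest
      refine Relation.ReflTransGen.head ⟨hstep.1, ?_⟩ ih
      rw [hρzero p hpc, hρzero w hrest]
  have hZpath : ∀ a, r a = 0 → Relation.ReflTransGen (Rel μ ρ) a (Fin.last n) := by
    have key : ∀ a, Relation.ReflTransGen (fun a b => 1 ≤ μ a b ∧ r a = 0 ∧ r b = 0) a
        (Fin.last n) → Relation.ReflTransGen (Rel μ ρ) a (Fin.last n) := by
      intro a h
      induction h using Relation.ReflTransGen.head_induction_on with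
      | refl => exact Relation.ReflTransGen.refl
      | head hstep hrest ih =>
        rename_i p w
        by_cases hpc : connW μ σ p
        · exact hWpath p hpc
        · have hpL : p ∈ L := by simp [hLdef, hstep.2.1, hpc]
          refine Relation.ReflTransGen.head ⟨hstep.1, ?_⟩ ih
          rw [hle_iff]
          by_cases hwL : w ∈ L
          · simp [hpL, hwL, hstep.2.1, hstep.2.2]
          · simp [hpL, hwL, hstep.2.1, hstep.2.2]
            exact hεpos.le
      
    intro a ha
    exact key a (zero_path hrU hrP ha)
  have hρP : Pp μ ρ := by
    intro v
    have key : ∀ a, Relation.ReflTransGen (Rel μ r) a (Fin.last n) →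
        Relation.ReflTransGen (Rel μ ρ) a (Fin.last n) := by
      intro a h
      induction h using Relation.ReflTransGen.head_induction_on with
      | refl => exact Relation.ReflTransGen.refl
      | head hstep hrest ih =>
        rename_i p w
        by_cases hpz : r p = 0
        · exact hZpath p hpz
        · have hppos : 0 < r p := lt_of_le_of_ne (hrnn p) (Ne.symm hpz)
          have hpL : p ∉ L := by simp [hLdef, hpz]
          refine Relation.ReflTransGen.head ⟨hstep.1, ?_⟩ ih
          rw [hle_iff]
          simp only [hpL, if_neg, not_false_iff, add_zero]
          by_cases hwL : w ∈ L
          · rw [if_pos hwL, hLzero w hwL, zero_add]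
            exact (hεlt p hppos).le
          · rw [if_neg hwL, add_zero]
            exact hstep.2
    exact key v (hrP v)
  -- labels of ρ
  have hρD : ∀ i : Fin n, Dlab μ ρ i ≤ σ i := by
    intro i
    set v : Fin (n + 1) := i.castSucc with hvdef
    by_cases hvL : v ∈ L
    · have hrv : r v = 0 := hLzero v hvL
      have hvnc : ¬ connW μ σ v := hLnc v hvL
      have hfilter : Finset.univ.filter (fun j => ρ j < ρ v)
          = Finset.univ.filter (fun j => r j = 0 ∧ connW μ σ j) := by
        ext j
        simp only [Finset.mem_filter, Finset.mem_univ, true_and]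
        rw [hlt_iff, if_pos hvL, hrv, zero_add]
        constructor
        · intro h
          by_cases hjL : j ∈ L
          · rw [if_pos hjL, hLzero j hjL, zero_add] at h
            exact absurd h (lt_irrefl ε)
          · rw [if_neg hjL, add_zero] at h
            have hjz : r j = 0 := by
              by_contra hjz
              have := hεlt j (lt_of_le_of_ne (hrnn j) (Ne.symm hjz))
              linarith
            refine ⟨hjz, ?_⟩
            by_contra hjc
            exact hjL (by simp [hLdef, hjz, hjc])
        · rintro ⟨hjz, hjc⟩
          have hjL : j ∉ L := by
            simp only [hLdef, Finset.mem_filter, Finset.mem_univ, true_and, not_and, not_not]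
            intro _; exact hjc
          rw [if_neg hjL, hjz, add_zero]
          exact hεpos
      rw [Dlab, hfilter]
      by_cases hvW : v ∈ Wz μ σ
      · refine le_trans (le_of_eq (Finset.sum_eq_zero ?_)) (Nat.zero_le _)
        intro j hj
        obtain ⟨hjz, hjc⟩ := Finset.mem_filter.mp hj
        by_contra hμvj
        have hμ1 : 1 ≤ μ v j := Nat.one_le_iff_ne_zero.mpr hμvj
        have hjW : j ∈ Wz μ σ := mem_Wz_of_connW hjc.2
        exact hvnc (Relation.ReflTransGen.head ⟨hμ1, hvW, hjW⟩ hjc.2)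
      · obtain ⟨r₂, hr₂, hr₂v⟩ := pos_of_not_Wz hvW
        have hsub : Finset.univ.filter (fun j => r j = 0 ∧ connW μ σ j)
            ⊆ Finset.univ.filter (fun j => r₂ j < r₂ v) := by
          intro j hj
          obtain ⟨_, hjc⟩ := Finset.mem_filter.mp hj
          have hjW : j ∈ Wz μ σ := mem_Wz_of_connW hjc.2
          simp only [Finset.mem_filter, Finset.mem_univ, true_and]
          rw [hjW r₂ hr₂]
          exact hr₂v
        calc ∑ j ∈ Finset.univ.filter (fun j => r j = 0 ∧ connW μ σ j), μ v j
            ≤ ∑ j ∈ Finset.univ.filter (fun j => r₂ j < r₂ v), μ v j :=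
              Finset.sum_le_sum_of_subset hsub
          _ ≤ σ i := hr₂.2.2 i
    · -- v ∉ L : labels agree with r
      have hfilter : Finset.univ.filter (fun j => ρ j < ρ v)
          = Finset.univ.filter (fun j => r j < r v) := by
        ext j
        simp only [Finset.mem_filter, Finset.mem_univ, true_and]
        rw [hlt_iff, if_neg hvL, add_zero]
        by_cases hjL : j ∈ L
        · rw [if_pos hjL, hLzero j hjL, zero_add]
          constructor
          · intro h
            linarith
          · intro h
            exact hεlt v h
        · rw [if_neg hjL, add_zero]
      rw [Dlab, hfilter]
      exact hr.2.2 i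
  -- contradiction : ρ ∈ Sp but ρ c > 0
  have hρSp : ρ ∈ Sp μ σ := ⟨hρU, hρP, hρD⟩
  have h0 : ρ c = 0 := hc ρ hρSp
  have h1 : 0 < ρ c := by
    have he : ρ c = (r c + ε) / c₀ := by rw [hρdef]; simp only [if_pos hcL]
    rw [he, hrc, zero_add]
    exact div_pos hεpos hc₀pos
  linarith

end Stmt4Aux

/-- if nonempty, the set `S_σ` of points of bounded cells with label
at most `σ` is star-shaped with respect to a point `q = (1/|I|)·e_I`. -/
theorem stmt4 {n : ℕ} (hn : 1 ≤ n) (μ : Fin (n + 1) → Fin (n + 1) → ℕ)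
    (hsym : ∀ i j, μ i j = μ j i) (hloop : ∀ i, μ i i = 0)
    (hconn : ConnectedOn μ Set.univ)
    (σ : Fin n → ℕ)
    (Sσ : Set (Fin (n + 1) → ℝ))
    (hSσ : Sσ = {p | p ∈ U n ∧ Bornology.IsBounded (openCell μ p) ∧
      ∀ i : Fin n, Dlab μ p i ≤ σ i})
    (hne : Sσ.Nonempty) :
    ∃ I : Finset (Fin (n + 1)), I.Nonempty ∧ Fin.last n ∉ I ∧
      qI I ∈ Sσ ∧ ∀ r ∈ Sσ, segment ℝ (qI I) r ⊆ Sσ := by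
  classical
  have hSp : Sσ = Stmt4Aux.Sp μ σ := by
    rw [hSσ]
    ext p
    simp only [Set.mem_setOf_eq, Stmt4Aux.Sp]
    constructor
    · rintro ⟨hU, hB, hD⟩
      exact ⟨hU, Stmt4Aux.Pp_of_isBounded hsym hconn hU hB, hD⟩
    · rintro ⟨hU, hP, hD⟩
      exact ⟨hU, Stmt4Aux.isBounded_of_Pp hsym hP, hD⟩
  rw [hSp] at hne ⊢
  obtain ⟨r₀, hr₀⟩ := hne
  have hconnall := Stmt4Aux.connW_all (μ := μ) (σ := σ) ⟨r₀, hr₀⟩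
  set I : Finset (Fin (n + 1)) := Finset.univ.filter (fun v => v ∉ Stmt4Aux.Wz μ σ)
    with hIdef
  have hmemI : ∀ v, v ∈ I ↔ v ∉ Stmt4Aux.Wz μ σ := by
    intro v; simp [hIdef]
  have hlastI : Fin.last n ∉ I := fun h => (hmemI _).mp h Stmt4Aux.last_mem_Wz
  have hIne : I.Nonempty := by
    by_contra h
    rw [Finset.not_nonempty_iff_eq_empty] at h
    have hall : ∀ v, r₀ v = 0 := by
      intro v
      by_cases hv : v ∈ Stmt4Aux.Wz μ σ
      · exact hv r₀ hr₀
      · exact absurd ((hmemI v).mpr hv) (by rw [h]; exact Finset.notMem_empty v)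
    have hs := Stmt4Aux.sum_all hr₀.1
    have hz : ∑ j : Fin (n + 1), r₀ j = 0 := Finset.sum_eq_zero fun j _ => hall j
    rw [hz] at hs
    exact absurd hs (by norm_num)
  have hcard : (0:ℝ) < (I.card : ℝ) := by exact_mod_cast Finset.card_pos.mpr hIne
  set q : Fin (n + 1) → ℝ := qI I with hqdef
  have hqmem : ∀ v ∈ Stmt4Aux.Wz μ σ, q v = 0 := by
    intro v hv
    rw [hqdef, qI, if_neg (fun h => (hmemI v).mp h hv)]
  have hqpos' : ∀ v, v ∉ Stmt4Aux.Wz μ σ → q v = 1 / (I.card : ℝ) := by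
    intro v hv
    rw [hqdef, qI, if_pos ((hmemI v).mpr hv)]
  have hqnn : ∀ v, 0 ≤ q v := by
    intro v
    by_cases hv : v ∈ Stmt4Aux.Wz μ σ
    · rw [hqmem v hv]
    · rw [hqpos' v hv]; positivity
  have hqU : q ∈ U n := by
    have hqsumall : ∑ j : Fin (n + 1), q j = 1 := by
      have : ∀ j : Fin (n + 1), q j = if j ∈ I then 1 / (I.card : ℝ) else 0 := by
        intro j; rw [hqdef, qI]
      rw [Finset.sum_congr rfl fun j _ => this j, Finset.sum_ite_mem, Finset.univ_inter,
        Finset.sum_const, nsmul_eq_mul]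
      field_simp
    have hlast0 : q (Fin.last n) = 0 := hqmem _ Stmt4Aux.last_mem_Wz
    refine ⟨hlast0, ?_⟩
    have h3 := Fin.sum_univ_castSucc (f := q)
    rw [hqsumall, hlast0, add_zero] at h3
    exact h3.symm
  -- edges into the common zero set are always counted
  have hsumW : ∀ i : Fin n, i.castSucc ∉ Stmt4Aux.Wz μ σ →
      (∑ j ∈ Finset.univ.filter (fun j => j ∈ Stmt4Aux.Wz μ σ), μ i.castSucc j) ≤ σ i := by
    intro i hv
    obtain ⟨r₂, hr₂, hpos⟩ := Stmt4Aux.pos_of_not_Wz hv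
    have hsub : Finset.univ.filter (fun j => j ∈ Stmt4Aux.Wz μ σ)
        ⊆ Finset.univ.filter (fun j => r₂ j < r₂ i.castSucc) := by
      intro j hj
      have hjW := (Finset.mem_filter.mp hj).2
      simp only [Finset.mem_filter, Finset.mem_univ, true_and]
      rw [hjW r₂ hr₂]
      exact hpos
    exact le_trans (Finset.sum_le_sum_of_subset hsub) (hr₂.2.2 i)
  have hqSp : q ∈ Stmt4Aux.Sp μ σ := by
    refine ⟨hqU, ?_, ?_⟩
    · exact Stmt4Aux.Pp_mix hconnall hr₀ hqmem hqnn
        (fun v w hv hw _ => by rw [hqpos' v hv, hqpos' w hw])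
    · intro i
      by_cases hvW : i.castSucc ∈ Stmt4Aux.Wz μ σ
      · have hempty : Finset.univ.filter (fun j => q j < q i.castSucc) = ∅ := by
          rw [Finset.filter_eq_empty_iff]
          intro j _
          rw [hqmem _ hvW]
          exact not_lt.mpr (hqnn j)
        rw [Dlab, hempty, Finset.sum_empty]
        exact Nat.zero_le _
      · have hfilter : Finset.univ.filter (fun j => q j < q i.castSucc)
            = Finset.univ.filter (fun j => j ∈ Stmt4Aux.Wz μ σ) := by
          ext j
          simp only [Finset.mem_filter, Finset.mem_univ, true_and]
          rw [hqpos' _ hvW]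
          constructor
          · intro hlt
            by_contra hjW
            rw [hqpos' j hjW] at hlt
            exact lt_irrefl _ hlt
          · intro hjW
            rw [hqmem j hjW]
            positivity
        rw [Dlab, hfilter]
        exact hsumW i hvW
  refine ⟨I, hIne, hlastI, hqSp, ?_⟩
  rintro r hr x hx
  obtain ⟨a, b, ha, hb, hab, rfl⟩ := hx
  by_cases ha0 : a = 0
  · have hb1 : b = 1 := by linarith
    rw [ha0, hb1, zero_smul, one_smul, zero_add]
    exact hr
  have hapos : 0 < a := lt_of_le_of_ne ha (Ne.symm ha0)
  have hxj : ∀ j, (a • q + b • r) j = a * q j + b * r j := by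
    intro j; simp [smul_eq_mul]
  have hrzero : ∀ v ∈ Stmt4Aux.Wz μ σ, r v = 0 := fun v hv => hv r hr
  have hrnn := Stmt4Aux.nonneg_of_Pp hr.1 hr.2.1
  have hx0 : ∀ v ∈ Stmt4Aux.Wz μ σ, (a • q + b • r) v = 0 := by
    intro v hv
    rw [hxj, hqmem v hv, hrzero v hv]
    ring
  have hxI : ∀ v, v ∉ Stmt4Aux.Wz μ σ →
      (a • q + b • r) v = a * (1 / (I.card : ℝ)) + b * r v := by
    intro v hv
    rw [hxj, hqpos' v hv]
  have hxnn : ∀ v, 0 ≤ (a • q + b • r) v := by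
    intro v
    rw [hxj]
    have := hqnn v
    have := hrnn v
    positivity
  have hxU : (a • q + b • r) ∈ U n := by
    constructor
    · rw [hxj, hqU.1, hr.1.1]; ring
    · have : ∀ i : Fin n, (a • q + b • r) i.castSucc
          = a * q i.castSucc + b * r i.castSucc := fun i => hxj _
      rw [Finset.sum_congr rfl fun i _ => this i, Finset.sum_add_distrib,
        ← Finset.mul_sum, ← Finset.mul_sum, hqU.2, hr.1.2]
      linarith
  refine ⟨hxU, ?_, ?_⟩
  · refine Stmt4Aux.Pp_mix hconnall hr hx0 hxnn ?_
    intro v w hv hw hle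
    rw [hxI v hv, hxI w hw]
    have := mul_le_mul_of_nonneg_left hle hb
    linarith
  · intro i
    by_cases hvW : i.castSucc ∈ Stmt4Aux.Wz μ σ
    · have hempty : Finset.univ.filter (fun j => (a • q + b • r) j < (a • q + b • r) i.castSucc)
          = ∅ := by
        rw [Finset.filter_eq_empty_iff]
        intro j _
        rw [hx0 _ hvW]
        exact not_lt.mpr (hxnn j)
      rw [Dlab, hempty, Finset.sum_empty]
      exact Nat.zero_le _
    · have hxv : (a • q + b • r) i.castSucc = a * (1 / (I.card : ℝ)) + b * r i.castSucc :=
        hxI _ hvW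
      by_cases hbr : 0 < b * r i.castSucc
      · have hbpos : 0 < b := by
          rcases lt_or_eq_of_le hb with h' | h'
          · exact h'
          · rw [← h', zero_mul] at hbr; exact absurd hbr (lt_irrefl 0)
        have hrvpos : 0 < r i.castSucc := by
          by_contra h'
          have : r i.castSucc = 0 := le_antisymm (not_lt.mp h') (hrnn _)
          rw [this, mul_zero] at hbr
          exact absurd hbr (lt_irrefl 0)
        have hfilter : Finset.univ.filter (fun j => (a • q + b • r) j < (a • q + b • r) i.castSucc)
            = Finset.univ.filter (fun j => r j < r i.castSucc) := by
          ext j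
          simp only [Finset.mem_filter, Finset.mem_univ, true_and]
          by_cases hjW : j ∈ Stmt4Aux.Wz μ σ
          · have h1 : (a • q + b • r) j = 0 := hx0 _ hjW
            have h2 : r j = 0 := hrzero _ hjW
            rw [h1, h2, hxv]
            constructor
            · intro _; exact hrvpos
            · intro _
              have : 0 < a * (1 / (I.card : ℝ)) := by positivity
              nlinarith
          · rw [hxI j hjW, hxv]
            constructor
            · intro h
              have := (mul_lt_mul_iff_right₀ hbpos).mp (by linarith : b * r j < b * r i.castSucc)
              exact this
            · intro h
              have := (mul_lt_mul_iff_right₀ hbpos).mpr h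
              linarith
        rw [Dlab, hfilter]
        exact hr.2.2 i
      · have hbrz : b * r i.castSucc = 0 :=
          le_antisymm (not_lt.mp hbr) (mul_nonneg hb (hrnn _))
        have hfilter : Finset.univ.filter (fun j => (a • q + b • r) j < (a • q + b • r) i.castSucc)
            = Finset.univ.filter (fun j => j ∈ Stmt4Aux.Wz μ σ) := by
          ext j
          simp only [Finset.mem_filter, Finset.mem_univ, true_and]
          rw [hxv, hbrz, add_zero]
          by_cases hjW : j ∈ Stmt4Aux.Wz μ σ
          · have h1 : (a • q + b • r) j = 0 := hx0 _ hjW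
            rw [h1]
            constructor
            · intro _; exact hjW
            · intro _; positivity
          · rw [hxI j hjW]
            constructor
            · intro h
              have : 0 ≤ b * r j := mul_nonneg hb (hrnn j)
              linarith
            · intro h; exact absurd h hjW
        rw [Dlab, hfilter]
        exact hsumW i hvW
end

section
/- Let I ⊆ [n] be nonempty. Then both induced subgraphs G[I] and G[V∖I] are connected if and only if m_I is a minimal generator of M_G; concretely, G[I] and G[V∖I] are both connected if and only if every nonempty subset J ⊆ [n] with ε_J(i) ≤ ε_I(i) for all i ∈ [n] (i.e., with m_J dividing m_I) satisfies J = I. -/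
/-! For `J ⊆ I`, `ε_J ≤ ε_I` says exactly that no edge joins `J` to `I ∖ J`, i.e. that `J` is a
union of components of `G[I]`; for `I ⊆ J` it says that no edge joins `J ∖ I` to `V ∖ J`, i.e. that
`V ∖ J` is a union of components of `G[V ∖ I]`. In general `ε_J ≤ ε_I` keeps every neighbour of a
vertex of `J ∖ I` inside `J`, so when `G[V ∖ I]` is connected, `J ∖ I` (which misses `n + 1`) is
empty. Thus divisors `m_J ≠ m_I` correspond to proper unions of components, which exist exactly
when `G[I]` or `G[V ∖ I]` is disconnected. -/

open Finset

section

variable {n : ℕ} (μ : Fin (n + 1) → Fin (n + 1) → ℕ)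

/-- `S ∩ T` is a union of connected components of `G[S]`. -/
def EdgeClosedIn (S : Set (Fin (n + 1))) (T : Finset (Fin (n + 1))) : Prop :=
  ∀ x ∈ T, x ∈ S → ∀ y ∈ S, y ∉ T → μ x y = 0

variable {μ}

theorem ConnectedOn.subset_of_edgeClosedIn {S : Set (Fin (n + 1))} {T : Finset (Fin (n + 1))}
    (hS : ConnectedOn μ S) {a : Fin (n + 1)} (haS : a ∈ S) (haT : a ∈ T)
    (hT : EdgeClosedIn μ S T) : S ⊆ T := by
  intro b hb
  induction hS a haS b hb with
  | refl => exact haT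
  | tail _ hxy ih =>
    obtain ⟨hx, hy, hμ⟩ := hxy
    by_contra hyT
    have := hT _ (ih hx) hx _ hy hyT
    omega

theorem connectedOn_of_forall_edgeClosedIn (hsym : ∀ i j, μ i j = μ j i)
    {S : Set (Fin (n + 1))} {a : Fin (n + 1)}
    (h : ∀ T : Finset (Fin (n + 1)), a ∈ T → EdgeClosedIn μ S T → S ⊆ T) :
    ConnectedOn μ S := by
  classical
  let adj := fun x y => x ∈ S ∧ y ∈ S ∧ 1 ≤ μ x y
  have : Std.Symm adj := ⟨fun x y ⟨hx, hy, hμ⟩ => ⟨hy, hx, hsym x y ▸ hμ⟩⟩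
  have hreach : S ⊆ (univ.filter (Relation.ReflTransGen adj a) : Finset _) := by
    refine h _ (mem_filter.2 ⟨mem_univ a, .refl⟩) fun x hx hxS y hyS hy => ?_
    by_contra hμ
    exact hy (by simpa using (mem_filter.1 hx).2.tail ⟨hxS, hyS, Nat.one_le_iff_ne_zero.2 hμ⟩)
  have hreach' : ∀ b ∈ S, Relation.ReflTransGen adj a b := fun b hb => (mem_filter.1 (hreach hb)).2
  intro i hi j hj
  exact (symm (hreach' i hi) : Relation.ReflTransGen adj i a).trans (hreach' j hj)

theorem dI_eq_dI_add_sum_sdiff {I J : Finset (Fin (n + 1))} (hJI : J ⊆ I) (x : Fin (n + 1)) :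
    dI μ J x = dI μ I x + ∑ y ∈ I \ J, μ x y := by
  rw [dI, dI, ← sum_sdiff (compl_subset_compl.2 hJI), compl_sdiff_compl, add_comm]

theorem forall_epsI_le_iff_edgeClosedIn_of_subset {I J : Finset (Fin (n + 1))} (hJI : J ⊆ I) :
    (∀ x, epsI μ J x ≤ epsI μ I x) ↔ EdgeClosedIn μ I J := by
  have hdecomp : ∀ x ∈ J, epsI μ J x = epsI μ I x + ∑ y ∈ I \ J, μ x y := fun x hx => by
    rw [epsI, if_pos hx, epsI, if_pos (hJI hx), dI_eq_dI_add_sum_sdiff hJI]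
  constructor
  · intro hle x hx _ y hy hyJ
    have := hle x
    rw [hdecomp x hx] at this
    exact sum_eq_zero_iff.1 (by omega) y (mem_sdiff.2 ⟨hy, hyJ⟩)
  · intro hT x
    by_cases hx : x ∈ J
    · rw [hdecomp x hx, sum_eq_zero fun y hy => hT x hx (hJI hx) y (mem_sdiff.1 hy).1
        (mem_sdiff.1 hy).2, add_zero]
    · simp [epsI, hx]

theorem forall_epsI_le_of_superset {I J : Finset (Fin (n + 1))} (hIJ : I ⊆ J)
    (hT : ∀ x ∈ J, x ∉ I → ∀ y ∉ J, μ x y = 0) (x : Fin (n + 1)) :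
    epsI μ J x ≤ epsI μ I x := by
  by_cases hxJ : x ∈ J
  · by_cases hxI : x ∈ I
    · rw [epsI, if_pos hxJ, epsI, if_pos hxI]
      exact sum_le_sum_of_subset (compl_subset_compl.2 hIJ)
    · rw [epsI, if_pos hxJ, dI, sum_eq_zero fun y hy => hT x hxJ hxI y (mem_compl.1 hy)]
      exact Nat.zero_le _
  · simp [epsI, hxJ]

theorem eq_zero_of_forall_epsI_le {I J : Finset (Fin (n + 1))}
    (hle : ∀ x, epsI μ J x ≤ epsI μ I x) {x y : Fin (n + 1)} (hxJ : x ∈ J) (hxI : x ∉ I)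
    (hyJ : y ∉ J) : μ x y = 0 := by
  have := hle x
  rw [epsI, if_pos hxJ, epsI, if_neg hxI, Nat.le_zero, dI] at this
  exact sum_eq_zero_iff.1 this y (mem_compl.2 hyJ)

theorem forall_epsI_le_of_castSucc {I J : Finset (Fin (n + 1))} (hI : Fin.last n ∉ I)
    (hJ : Fin.last n ∉ J) (hle : ∀ i : Fin n, epsI μ J i.castSucc ≤ epsI μ I i.castSucc)
    (x : Fin (n + 1)) : epsI μ J x ≤ epsI μ I x := by
  rcases Fin.eq_castSucc_or_eq_last x with ⟨i, rfl⟩ | rfl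
  · exact hle i
  · simp [epsI, hI, hJ]

theorem coe_subset_of_edgeClosedIn_of_minimal {I T : Finset (Fin (n + 1))}
    (hmin : ∀ J : Finset (Fin (n + 1)), J.Nonempty → Fin.last n ∉ J →
      (∀ x, epsI μ J x ≤ epsI μ I x) → J = I)
    (hIlast : Fin.last n ∉ I) {i : Fin (n + 1)} (hi : i ∈ I) (hiT : i ∈ T)
    (hT : EdgeClosedIn μ I T) : (I : Set (Fin (n + 1))) ⊆ T := by
  have hTI : T ∩ I = I := hmin _ ⟨i, mem_inter.2 ⟨hiT, hi⟩⟩ (fun h => hIlast (mem_inter.1 h).2) <|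
    (forall_epsI_le_iff_edgeClosedIn_of_subset inter_subset_right).2
      fun x hx hxI y hy hyTI => hT x (mem_inter.1 hx).1 hxI y hy
        fun hyT => hyTI (mem_inter.2 ⟨hyT, hy⟩)
  exact coe_subset.2 (hTI ▸ inter_subset_left)

theorem compl_subset_of_edgeClosedIn_of_minimal (hsym : ∀ i j, μ i j = μ j i)
    {I T : Finset (Fin (n + 1))}
    (hmin : ∀ J : Finset (Fin (n + 1)), J.Nonempty → Fin.last n ∉ J →
      (∀ x, epsI μ J x ≤ epsI μ I x) → J = I)
    (hI : I.Nonempty) (hIlast : Fin.last n ∉ I) (hlT : Fin.last n ∈ T)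
    (hT : EdgeClosedIn μ (I : Set (Fin (n + 1)))ᶜ T) : (I : Set (Fin (n + 1)))ᶜ ⊆ T := by
  have hTI : (T \ I)ᶜ = I := hmin _ (hI.mono fun x hx => by simp [hx]) (by simp [hlT, hIlast]) <|
    forall_epsI_le_of_superset (fun x hx => by simp [hx]) fun x hx hxI y hy => by
      have hxT : x ∉ T := fun hxT => mem_compl.1 hx (mem_sdiff.2 ⟨hxT, hxI⟩)
      obtain ⟨hyT, hyI⟩ : y ∈ T ∧ y ∉ I := by simpa using hy
      rw [hsym]
      exact hT y hyT hyI x hxI hxT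
  intro x hx
  by_contra hxT
  exact hx (hTI ▸ mem_compl.2 fun h => hxT (mem_sdiff.1 h).1)

end

theorem stmt5_general {n : ℕ} (μ : Fin (n + 1) → Fin (n + 1) → ℕ)
    (hsym : ∀ i j, μ i j = μ j i)
    (I : Finset (Fin (n + 1))) (hI : I.Nonempty) (hIlast : Fin.last n ∉ I) :
    (ConnectedOn μ (I : Set (Fin (n + 1))) ∧ ConnectedOn μ ((I : Set (Fin (n + 1)))ᶜ)) ↔
      ∀ J : Finset (Fin (n + 1)), J.Nonempty → Fin.last n ∉ J →
        (∀ i : Fin n, epsI μ J i.castSucc ≤ epsI μ I i.castSucc) → J = I := by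
  constructor
  · rintro ⟨hconnI, hconnIc⟩ J ⟨j, hj⟩ hJlast hle
    replace hle := forall_epsI_le_of_castSucc hIlast hJlast hle
    have hJI : J ⊆ I := fun i hiJ => by_contra fun hiI => hJlast <|
      hconnIc.subset_of_edgeClosedIn (a := i) hiI hiJ
        (fun x hxJ hxI y _ hyJ => eq_zero_of_forall_epsI_le hle hxJ hxI hyJ) hIlast
    exact hJI.antisymm <| hconnI.subset_of_edgeClosedIn (hJI hj) hj
      ((forall_epsI_le_iff_edgeClosedIn_of_subset hJI).1 hle)
  · intro hmin
    replace hmin : ∀ J : Finset (Fin (n + 1)), J.Nonempty → Fin.last n ∉ J →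
        (∀ x, epsI μ J x ≤ epsI μ I x) → J = I :=
      fun J hJ hJlast hle => hmin J hJ hJlast fun i => hle i.castSucc
    obtain ⟨i, hi⟩ := hI
    exact ⟨connectedOn_of_forall_edgeClosedIn hsym fun T hiT hT =>
        coe_subset_of_edgeClosedIn_of_minimal hmin hIlast hi hiT hT,
      connectedOn_of_forall_edgeClosedIn hsym fun T hlT hT =>
        compl_subset_of_edgeClosedIn_of_minimal hsym hmin ⟨i, hi⟩ hIlast hlT hT⟩

/-- `G[I]` and `G[V∖I]` are both connected iff `m_I` is a minimal
generator of `M_G`, i.e. iff the only nonempty `J ⊆ [n]` with `m_J ∣ m_I`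
(componentwise `ε_J ≤ ε_I`) is `J = I`. -/
theorem stmt5 {n : ℕ} (hn : 1 ≤ n) (μ : Fin (n + 1) → Fin (n + 1) → ℕ)
    (hsym : ∀ i j, μ i j = μ j i) (hloop : ∀ i, μ i i = 0)
    (hconn : ConnectedOn μ Set.univ)
    (I : Finset (Fin (n + 1))) (hI : I.Nonempty) (hIlast : Fin.last n ∉ I) :
    (ConnectedOn μ (I : Set (Fin (n + 1))) ∧ ConnectedOn μ ((I : Set (Fin (n + 1)))ᶜ)) ↔
      ∀ J : Finset (Fin (n + 1)), J.Nonempty → Fin.last n ∉ J →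
        (∀ i : Fin n, epsI μ J i.castSucc ≤ epsI μ I i.castSucc) → J = I :=
  stmt5_general μ hsym I hI hIlast
end

section
/- Suppose G is a simple graph (μ takes values in {0,1}) that is a tree on the vertex set V = {1,…,n+1}. Then M_G = ⟨x_1, x_2, …, x_n⟩, the maximal monomial ideal generated by the variables of k[x_1,…,x_n]. -/
open Finset

/-!
`m_I` is divisible by `x_i` for every `i ∈ I` with a neighbour outside `I`; since `G`
is connected and `n+1 ∉ I`, some such `i` exists, so `M_G ⊆ ⟨x_1, …, x_n⟩`. Conversely, for
`i ≤ n` let `v` be the neighbour of `i` towards `n+1` in the tree and let `I` be the component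
of `i` after deleting the bridge `iv`. Then `iv` is the only edge leaving `I`, so `m_I = x_i`.
-/

namespace SimpleGraph

variable {V : Type*} [Fintype V] {G : SimpleGraph V}

theorem IsTree.exists_single_edge_cut (hG : G.IsTree) {a t : V} (hat : a ≠ t) :
    ∃ (S : Finset V) (v : V), a ∈ S ∧ t ∉ S ∧ v ∉ S ∧ G.Adj a v ∧
      ∀ w ∈ S, ∀ u ∉ S, G.Adj w u → w = a ∧ u = v := by
  classical
  obtain ⟨p⟩ := hG.connected.preconnected a t
  obtain ⟨p, hp⟩ := p.toPath
  obtain ⟨v, hav, q, rfl⟩ := Walk.exists_eq_cons_of_ne hat p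
  set H := G.deleteEdges {s(a, v)}
  have hbridge : ¬ H.Reachable a v := isAcyclic_iff_forall_adj_isBridge.mp hG.isAcyclic hav
  have hvt : H.Reachable v t := reachable_deleteEdges_iff_exists_walk.mpr
    ⟨q, fun h => ((Walk.cons_isPath_iff _ _).mp hp).2 (q.fst_mem_support_of_mem_edges h)⟩
  refine ⟨univ.filter (H.Reachable a), v, by simp, fun ht => hbridge ?_, by simpa using hbridge,
    hav, ?_⟩
  · exact (mem_filter.mp ht).2.trans hvt.symm
  intro w hw u hu hwu
  simp only [mem_filter, mem_univ, true_and] at hw hu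
  have hcut : s(w, u) = s(a, v) := by
    by_contra hne
    exact hu (hw.trans (deleteEdges_adj.mpr ⟨hwu, hne⟩).reachable)
  rcases Sym2.eq_iff.mp hcut with h | ⟨rfl, -⟩
  · exact h
  · exact absurd hw hbridge

end SimpleGraph

section MonomialIdeal

variable {n : ℕ} (k : Type*) [Field k] {μ : Fin (n + 1) → Fin (n + 1) → ℕ}

theorem X_dvd_mI {I : Finset (Fin (n + 1))} {i : Fin n} {u : Fin (n + 1)} (hi : i.castSucc ∈ I)
    (hu : u ∉ I) (hμ : 1 ≤ μ i.castSucc u) : MvPolynomial.X i ∣ mI k μ I := by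
  have hε : 1 ≤ epsI μ I i.castSucc := by
    rw [epsI, if_pos hi, dI]
    exact hμ.trans (single_le_sum (fun _ _ => Nat.zero_le _) (mem_compl.mpr hu))
  exact (dvd_pow_self _ (by omega)).trans
    (dvd_prod_of_mem (fun j => MvPolynomial.X j ^ epsI μ I j.castSucc) (mem_univ i))

theorem mI_eq_X_of_single_edge_cut {I : Finset (Fin (n + 1))} {i : Fin n} {v : Fin (n + 1)}
    (hi : i.castSucc ∈ I) (hv : v ∉ I) (hμ : μ i.castSucc v = 1)
    (hcut : ∀ w ∈ I, ∀ u ∉ I, 1 ≤ μ w u → w = i.castSucc ∧ u = v) :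
    mI k μ I = MvPolynomial.X i := by
  have hzero : ∀ w ∈ I, ∀ u ∈ Iᶜ, ¬ (w = i.castSucc ∧ u = v) → μ w u = 0 := fun w hw u hu h =>
    Nat.lt_one_iff.mp (not_le.mp fun h' => h (hcut w hw u (mem_compl.mp hu) h'))
  have hεi : epsI μ I i.castSucc = 1 := by
    rw [epsI, if_pos hi, dI, sum_eq_single_of_mem v (mem_compl.mpr hv)
      fun u hu huv => hzero _ hi u hu (huv ∘ And.right), hμ]
  have hεj : ∀ j ≠ i, epsI μ I j.castSucc = 0 := by
    intro j hj
    unfold epsI dI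
    split_ifs with hjI
    · exact sum_eq_zero fun u hu => hzero _ hjI u hu fun h => hj (Fin.castSucc_injective n h.1)
    · rfl
  rw [mI, Fintype.prod_eq_single i fun j hj => by rw [hεj j hj, pow_zero], hεi, pow_one]

theorem MG_le_span_X (G : SimpleGraph (Fin (n + 1))) (hG : ∀ i j, G.Adj i j → 1 ≤ μ i j)
    (hconn : G.Connected) :
    MG k μ ≤ Ideal.span (Set.range (MvPolynomial.X : Fin n → MvPolynomial (Fin n) k)) := by
  rw [MG, Ideal.span_le]
  rintro _ ⟨I, ⟨w, hw⟩, hlast, rfl⟩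
  obtain ⟨p⟩ := hconn.preconnected w (Fin.last n)
  obtain ⟨d, -, hd, hd'⟩ := p.exists_boundary_dart I hw hlast
  obtain ⟨i, hi⟩ := Fin.exists_castSucc_eq.mpr (ne_of_mem_of_not_mem hd hlast)
  rw [← hi] at hd
  exact Ideal.mem_of_dvd _ (X_dvd_mI k hd hd' (hi ▸ hG _ _ d.adj))
    (Ideal.subset_span (Set.mem_range_self i))

theorem X_mem_MG_of_isTree (hsimple : ∀ i j, μ i j ≤ 1) (G : SimpleGraph (Fin (n + 1)))
    (hG : ∀ i j, G.Adj i j ↔ 1 ≤ μ i j) (htree : G.IsTree) (i : Fin n) :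
    MvPolynomial.X i ∈ MG k μ := by
  obtain ⟨I, v, hi, hlast, hv, hadj, hcut⟩ :=
    htree.exists_single_edge_cut (Fin.castSucc_lt_last i).ne
  rw [← mI_eq_X_of_single_edge_cut k hi hv (le_antisymm (hsimple _ _) ((hG _ _).mp hadj))
    fun w hw u hu hμ => hcut w hw u hu ((hG w u).mpr hμ)]
  exact Ideal.subset_span ⟨I, ⟨_, hi⟩, hlast, rfl⟩

end MonomialIdeal

theorem stmt7_general {n : ℕ} (k : Type*) [Field k]
    (μ : Fin (n + 1) → Fin (n + 1) → ℕ)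
    (hsimple : ∀ i j, μ i j ≤ 1)
    (G' : SimpleGraph (Fin (n + 1))) (hG' : ∀ i j, G'.Adj i j ↔ 1 ≤ μ i j)
    (htree : G'.IsTree) :
    MG k μ = Ideal.span (Set.range (MvPolynomial.X : Fin n → MvPolynomial (Fin n) k)) :=
  le_antisymm (MG_le_span_X k G' (fun i j => (hG' i j).mp) htree.connected)
    (Ideal.span_le.mpr <| Set.range_subset_iff.mpr <| X_mem_MG_of_isTree k hsimple G' hG' htree)

/-- if `G` is a simple tree on `{1, …, n+1}` then
`M_G = ⟨x_1, …, x_n⟩`. -/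
theorem stmt7 {n : ℕ} (hn : 1 ≤ n) (k : Type*) [Field k]
    (μ : Fin (n + 1) → Fin (n + 1) → ℕ)
    (hsym : ∀ i j, μ i j = μ j i) (hloop : ∀ i, μ i i = 0)
    (hsimple : ∀ i j, μ i j ≤ 1)
    (G' : SimpleGraph (Fin (n + 1))) (hG' : ∀ i j, G'.Adj i j ↔ 1 ≤ μ i j)
    (htree : G'.IsTree) :
    MG k μ = Ideal.span (Set.range (MvPolynomial.X : Fin n → MvPolynomial (Fin n) k)) :=
  stmt7_general k μ hsimple G' hG' htree
end

section
/- Suppose G is a simple graph (μ takes values in {0,1}) that is a tree on V = {1,…,n+1}. For each edge e = {a,b} of G, let I_e ⊆ [n] be the vertex set of the connected component of G − e (the graph G with edge e deleted) that does not contain n+1, and let q_e := (1/|I_e|)·e_{I_e} ∈ U. Then the n points q_e (one for each edge of G) are affinely independent, and the union of all bounded cells, ⋃ { C(p) : p ∈ U, C(p) bounded }, equals the convex hull of the points q_e; in particular the bounded complex of the restricted graphical arrangement of a tree is an (n−1)-dimensional simplex. -/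
open Finset

/-!
Orient every edge `e` of the tree from its endpoint `a e ∈ I e` to its endpoint `b e ∉ I e`.
Telescoping along the path from the root `n + 1` gives
`x v - x (n + 1) = ∑_{e : v ∈ I e} (x (a e) - x (b e))`, so every `x ∈ U` is the affine combination
`x = ∑_e |I e| (x (a e) - x (b e)) q_e`; the `q_e` are independent because the increment along
`e` vanishes on every `q_f` with `f ≠ e`, and their convex hull is the part of `U` where all
increments are nonnegative. The cell of such a point keeps all increments nonnegative, hence lies
in the bounded set `U ∩ ℝ≥0^{n+1}`. If instead some increment is negative, moving mass from the
vertices of `I e` lying weakly below `a e` to the vertices where `x` is maximal never reverses the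
order of two adjacent coordinates, so the cell contains a ray.
-/

namespace SimpleGraph

variable {V : Type*} {G : SimpleGraph V}

lemma Reachable.deleteEdges_or {a b w : V} (h : G.Reachable a w) :
    (G.deleteEdges {s(a, b)}).Reachable a w ∨ (G.deleteEdges {s(a, b)}).Reachable b w := by
  rw [reachable_iff_reflTransGen] at h
  induction h with
  | refl => exact Or.inl .rfl
  | @tail m c _ hmc ih =>
    by_cases hc : s(m, c) = s(a, b)
    · rcases Sym2.eq_iff.mp hc with ⟨-, rfl⟩ | ⟨-, rfl⟩
      · exact Or.inr .rfl
      · exact Or.inl .rfl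
    · have hadj : (G.deleteEdges {s(a, b)}).Adj m c := by simpa [hc] using hmc
      exact ih.imp (·.trans hadj.reachable) (·.trans hadj.reachable)

def IsFarSide (G : SimpleGraph V) (r : V) (I : Sym2 V → Finset V) : Prop :=
  ∀ e ∈ G.edgeSet, ∀ v, v ∈ I e ↔ ¬ (G.deleteEdges {e}).Reachable v r

structure IsOrientation (I : Sym2 V → Finset V) (a b : G.edgeSet → V) : Prop where
  edge_eq : ∀ e : G.edgeSet, (e : Sym2 V) = s(a e, b e)
  mem : ∀ e : G.edgeSet, a e ∈ I e
  notMem : ∀ e : G.edgeSet, b e ∉ I e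

namespace IsOrientation

variable {I : Sym2 V → Finset V} {a b : G.edgeSet → V}

lemma adj (ho : IsOrientation I a b) (e : G.edgeSet) : G.Adj (a e) (b e) := by
  have := e.2
  rwa [ho.edge_eq] at this

lemma card_ne_zero (ho : IsOrientation I a b) (e : G.edgeSet) :
    ((I e).card : ℝ) ≠ 0 := by
  exact_mod_cast (card_pos.mpr ⟨a e, ho.mem e⟩).ne'

end IsOrientation

namespace IsFarSide

variable {r u v : V} {I : Sym2 V → Finset V} {e : Sym2 V}

lemma root_notMem (hI : G.IsFarSide r I) (he : e ∈ G.edgeSet) : r ∉ I e := by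
  simp [hI e he]

lemma mem_iff_mem_of_adj (hI : G.IsFarSide r I) (he : e ∈ G.edgeSet) (huv : G.Adj u v)
    (hne : s(u, v) ≠ e) : u ∈ I e ↔ v ∈ I e := by
  have hadj : (G.deleteEdges {e}).Adj u v := by simpa [hne] using huv
  rw [hI e he, hI e he, not_iff_not]
  exact ⟨hadj.symm.reachable.trans, hadj.reachable.trans⟩

lemma mem_iff_notMem (hI : G.IsFarSide r I) (hG : G.IsTree) (huv : G.Adj u v) :
    u ∈ I s(u, v) ↔ v ∉ I s(u, v) := by
  rw [hI _ huv, hI _ huv, not_not]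
  refine ⟨(hG.connected.preconnected u r).deleteEdges_or.resolve_left, fun hv hu => ?_⟩
  exact isAcyclic_iff_forall_adj_isBridge.mp hG.isAcyclic huv (hu.trans hv.symm)

lemma exists_isOrientation (hI : G.IsFarSide r I) (hG : G.IsTree) :
    ∃ a b : G.edgeSet → V, IsOrientation I a b := by
  have key : ∀ e : G.edgeSet, ∃ x y, (e : Sym2 V) = s(x, y) ∧ x ∈ I e ∧ y ∉ I e := by
    rintro ⟨e, he⟩
    induction e with
    | h u v =>
      by_cases hu : u ∈ I s(u, v)
      · exact ⟨u, v, rfl, hu, (hI.mem_iff_notMem hG he).mp hu⟩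
      · exact ⟨v, u, Sym2.eq_swap, not_not.mp ((hI.mem_iff_notMem hG he).not.mp hu), hu⟩
  choose a b edge_eq mem notMem using key
  exact ⟨a, b, ⟨edge_eq, mem, notMem⟩⟩

variable {a b : G.edgeSet → V}

lemma eq_of_adj_of_mem_of_notMem (hI : G.IsFarSide r I) (ho : IsOrientation I a b)
    (huv : G.Adj u v) {e : G.edgeSet} (hu : u ∈ I e) (hv : v ∉ I e) : u = a e ∧ v = b e := by
  by_cases hne : s(u, v) = e
  · rw [ho.edge_eq] at hne
    rcases Sym2.eq_iff.mp hne with h | ⟨rfl, -⟩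
    · exact h
    · exact absurd hu (ho.notMem e)
  · exact absurd ((hI.mem_iff_mem_of_adj e.2 huv hne).mp hu) hv

variable [Fintype G.edgeSet] [DecidableEq V] {M : Type*} [AddCommGroup M]

lemma sum_sub_sum_of_adj (hI : G.IsFarSide r I) (hG : G.IsTree) (ho : IsOrientation I a b)
    (x : V → M) (huv : G.Adj u v) :
    (∑ e : G.edgeSet, if u ∈ I e then x (a e) - x (b e) else 0) -
      (∑ e : G.edgeSet, if v ∈ I e then x (a e) - x (b e) else 0) = x u - x v := by
  set e₀ : G.edgeSet := ⟨s(u, v), huv⟩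
  rw [← Finset.sum_sub_distrib, Finset.sum_eq_single_of_mem e₀ (Finset.mem_univ _)]
  · by_cases hu : u ∈ I e₀
    · have hv : v ∉ I e₀ := (hI.mem_iff_notMem hG huv).mp hu
      obtain ⟨hua, hvb⟩ := hI.eq_of_adj_of_mem_of_notMem ho huv hu hv
      rw [if_pos hu, if_neg hv, sub_zero, ← hua, ← hvb]
    · have hv : v ∈ I e₀ := not_not.mp ((hI.mem_iff_notMem hG huv).not.mp hu)
      obtain ⟨hva, hub⟩ := hI.eq_of_adj_of_mem_of_notMem ho huv.symm hv hu
      rw [if_neg hu, if_pos hv, zero_sub, neg_sub, ← hva, ← hub]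
  · intro f _ hf
    have hne : s(u, v) ≠ f := fun h => hf (Subtype.ext h).symm
    simp only [hI.mem_iff_mem_of_adj f.2 huv hne, sub_self]

lemma sum_ite_mem_sub_eq (hI : G.IsFarSide r I) (hG : G.IsTree) (ho : IsOrientation I a b)
    (x : V → M) (v : V) :
    (∑ e : G.edgeSet, if v ∈ I e then x (a e) - x (b e) else 0) = x v - x r := by
  induction (reachable_iff_reflTransGen r v).mp (hG.connected.preconnected r v) with
  | refl => simp [hI.root_notMem (Subtype.prop _)]
  | @tail m c _ hmc ih =>
    linear_combination (norm := abel) ih - hI.sum_sub_sum_of_adj hG ho x hmc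

lemma root_le [PartialOrder M] [IsOrderedAddMonoid M] (hI : G.IsFarSide r I) (hG : G.IsTree)
    (ho : IsOrientation I a b) {x : V → M}
    (hx : ∀ e, x (b e) ≤ x (a e)) (v : V) : x r ≤ x v := by
  rw [← sub_nonneg, ← hI.sum_ite_mem_sub_eq hG ho]
  exact sum_nonneg fun e _ => by split_ifs <;> simp [hx e]

end IsFarSide

end SimpleGraph

open Bornology

section Cells

variable {n : ℕ} {μ : Fin (n + 1) → Fin (n + 1) → ℕ} {G : SimpleGraph (Fin (n + 1))}
  {p x y z : Fin (n + 1) → ℝ}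

lemma mem_openCell_self (hx : x ∈ U n) : x ∈ openCell μ x :=
  ⟨hx, fun _ _ _ => ⟨Iff.rfl, Iff.rfl⟩⟩

lemma openCell_subset_openCell (hy : y ∈ openCell μ p) : openCell μ y ⊆ openCell μ p :=
  fun _ hq => ⟨hq.1, fun i j hij => ⟨(hq.2 i j hij).1.trans (hy.2 i j hij).1,
    (hq.2 i j hij).2.trans (hy.2 i j hij).2⟩⟩

lemma sum_eq_one_of_mem_U (hx : x ∈ U n) : ∑ v, x v = 1 := by
  rw [Fin.sum_univ_castSucc, hx.1, add_zero, hx.2]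

lemma convex_U : Convex ℝ (U n) := by
  rintro x ⟨hx₀, hx₁⟩ y ⟨hy₀, hy₁⟩ s t - - hst
  refine ⟨by simp [hx₀, hy₀], ?_⟩
  simp [sum_add_distrib, ← mul_sum, hx₁, hy₁, hst]

lemma sum_qI {S : Finset (Fin (n + 1))} (hS : S.Nonempty) : ∑ v, qI S v = 1 := by
  have : (S.card : ℝ) ≠ 0 := by exact_mod_cast hS.card_pos.ne'
  simp [qI, sum_ite_mem, this]

lemma qI_mem_U {S : Finset (Fin (n + 1))} (hS : S.Nonempty) (hlast : Fin.last n ∉ S) :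
    qI S ∈ U n := by
  have hl : qI S (Fin.last n) = 0 := if_neg hlast
  have hsum := sum_qI hS
  rw [Fin.sum_univ_castSucc, hl, add_zero] at hsum
  exact ⟨hl, hsum⟩

lemma qI_le_qI {S : Finset (Fin (n + 1))} {i j : Fin (n + 1)} (h : i ∈ S → j ∈ S) :
    qI S i ≤ qI S j := by
  unfold qI
  split_ifs with hi hj hj
  · exact le_rfl
  · exact absurd (h hi) hj
  · positivity
  · exact le_rfl

lemma isBounded_U_inter_nonneg : IsBounded {y | y ∈ U n ∧ 0 ≤ y} := by
  refine (Metric.isBounded_Icc (0 : Fin (n + 1) → ℝ) 1).subset fun y ⟨hyU, hy₀⟩ => ⟨hy₀, ?_⟩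
  intro v
  cases v using Fin.lastCases with
  | last => simp [hyU.1]
  | cast i =>
    calc y i.castSucc ≤ ∑ j : Fin n, y j.castSucc :=
          single_le_sum (fun j _ => hy₀ j.castSucc) (mem_univ i)
      _ = 1 := hyU.2

lemma add_smul_mem_openCell_s8 (hGμ : ∀ i j, G.Adj i j ↔ 1 ≤ μ i j) (hx : x ∈ U n)
    (hz : z (Fin.last n) = 0) (hzsum : ∑ i : Fin n, z i.castSucc = 0)
    (hmono : ∀ i j, G.Adj i j → x i ≤ x j → z i ≤ z j) {t : ℝ} (ht : 0 ≤ t) :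
    x + t • z ∈ openCell μ x := by
  refine ⟨⟨by simp [hx.1, hz], by simp [sum_add_distrib, ← mul_sum, hx.2, hzsum]⟩,
    fun i j hij => ?_⟩
  have hadj := (hGμ i j).mpr hij
  simp only [Pi.add_apply, Pi.smul_apply, smul_eq_mul]
  rcases lt_trichotomy (x i) (x j) with h | h | h
  · have := mul_le_mul_of_nonneg_left (hmono i j hadj h.le) ht
    refine ⟨⟨fun _ => h, fun _ => by linarith⟩, ⟨fun _ => by linarith, fun _ => by linarith⟩⟩
  · have := le_antisymm (hmono i j hadj h.le) (hmono j i hadj.symm h.ge)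
    simp [h, this]
  · have := mul_le_mul_of_nonneg_left (hmono j i hadj.symm h.le) ht
    refine ⟨⟨fun _ => by linarith, fun _ => by linarith⟩,
      ⟨fun _ => by linarith, fun _ => by linarith⟩⟩

lemma not_isBounded_openCell_of_ray (hGμ : ∀ i j, G.Adj i j ↔ 1 ≤ μ i j) (hx : x ∈ U n)
    (hz₀ : z ≠ 0) (hz : z (Fin.last n) = 0) (hzsum : ∑ i : Fin n, z i.castSucc = 0)
    (hmono : ∀ i j, G.Adj i j → x i ≤ x j → z i ≤ z j) : ¬ IsBounded (openCell μ x) := by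
  intro hbdd
  obtain ⟨C, hC⟩ := isBounded_iff_forall_norm_le.mp hbdd
  have hzpos : 0 < ‖z‖ := norm_pos_iff.mpr hz₀
  have hxC : ‖x‖ ≤ C := hC x (mem_openCell_self hx)
  set t := (C + ‖x‖ + 1) / ‖z‖
  have ht : 0 ≤ t := div_nonneg (by linarith [norm_nonneg x]) hzpos.le
  have hray := hC _ (add_smul_mem_openCell_s8 hGμ hx hz hzsum hmono ht)
  have htz : ‖t • z‖ ≤ ‖x + t • z‖ + ‖x‖ := by
    simpa using norm_sub_le (x + t • z) x
  rw [norm_smul, Real.norm_of_nonneg ht, div_mul_cancel₀ _ hzpos.ne'] at htz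
  linarith

lemma not_isBounded_openCell_of_upper_lower (hGμ : ∀ i j, G.Adj i j ↔ 1 ≤ μ i j)
    (hx : x ∈ U n) {S T : Finset (Fin (n + 1))} (hS : S.Nonempty) (hT : T.Nonempty)
    (hSl : Fin.last n ∉ S) (hTl : Fin.last n ∉ T) {v : Fin (n + 1)} (hvT : v ∈ T) (hvS : v ∉ S)
    (hup : ∀ i j, G.Adj i j → x i ≤ x j → i ∈ S → j ∈ S)
    (hdown : ∀ i j, G.Adj i j → x i ≤ x j → j ∈ T → i ∈ T) : ¬ IsBounded (openCell μ x) := by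
  have hSU := qI_mem_U hS hSl
  have hTU := qI_mem_U hT hTl
  refine not_isBounded_openCell_of_ray (z := qI S - qI T) hGμ hx ?_ ?_ ?_ ?_
  · intro h
    have := congrFun h v
    have hcard : (0 : ℝ) < T.card := by exact_mod_cast hT.card_pos
    simp [qI, hvT, hvS, hcard.ne'] at this
  · simp [hSU.1, hTU.1]
  · simp [sum_sub_distrib, hSU.2, hTU.2]
  · intro i j hij hxij
    exact sub_le_sub (qI_le_qI (hup i j hij hxij)) (qI_le_qI (hdown i j hij hxij))

end Cells

section Tree

open SimpleGraph

variable {n : ℕ} {μ : Fin (n + 1) → Fin (n + 1) → ℕ} {G : SimpleGraph (Fin (n + 1))}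
  {r : Fin (n + 1)} {I : Sym2 (Fin (n + 1)) → Finset (Fin (n + 1))}
  {a b : G.edgeSet → Fin (n + 1)} {x : Fin (n + 1) → ℝ}

lemma qI_sub_qI (hI : G.IsFarSide r I) (ho : IsOrientation I a b) (e f : G.edgeSet) :
    qI (I f) (a e) - qI (I f) (b e) = if e = f then 1 / ((I e).card : ℝ) else 0 := by
  split_ifs with h
  · subst h
    simp [qI, ho.mem e, ho.notMem e]
  · have hne : s(a e, b e) ≠ f := by
      rw [← ho.edge_eq]
      exact fun h' => h (Subtype.ext h')
    unfold qI
    rw [if_congr (hI.mem_iff_mem_of_adj f.2 (ho.adj e) hne) rfl rfl, sub_self]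

lemma not_isBounded_openCell_of_lt (hGμ : ∀ i j, G.Adj i j ↔ 1 ≤ μ i j)
    (hI : G.IsFarSide (Fin.last n) I) (ho : IsOrientation I a b) (hx : x ∈ U n)
    {e : G.edgeSet} (he : x (a e) < x (b e)) : ¬ IsBounded (openCell μ x) := by
  obtain ⟨m, -, hm⟩ := exists_max_image univ x univ_nonempty
  have hm_pos : 0 < x m := by
    obtain ⟨i, -, hi⟩ := exists_lt_of_sum_lt (s := univ) (f := 0)
      (g := fun i : Fin n => x i.castSucc) (by simp [hx.2])
    exact hi.trans_le (hm _ (mem_univ _))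
  refine not_isBounded_openCell_of_upper_lower hGμ hx (S := univ.filter (x · = x m))
    (T := (I e).filter (x · ≤ x (a e))) ⟨m, by simp⟩ ⟨a e, by simp [ho.mem e]⟩
    (by simp [hx.1, hm_pos.ne]) (by simp [hI.root_notMem e.2]) (v := a e)
    (by simp [ho.mem e]) (by simpa using (he.trans_le (hm _ (mem_univ _))).ne) ?_ ?_
  · simp only [mem_filter, mem_univ, true_and]
    exact fun i j _ hij hi => le_antisymm (hm _ (mem_univ _)) (hi ▸ hij)
  · simp only [mem_filter]
    rintro i j hij hxij ⟨hj, hja⟩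
    refine ⟨by_contra fun hi => ?_, hxij.trans hja⟩
    obtain ⟨rfl, rfl⟩ := hI.eq_of_adj_of_mem_of_notMem ho hij.symm hj hi
    exact hxij.not_gt he

variable [Fintype G.edgeSet]

lemma linearIndependent_qI (hI : G.IsFarSide r I) (ho : IsOrientation I a b) :
    LinearIndependent ℝ fun e : G.edgeSet => qI (I e) := by
  rw [Fintype.linearIndependent_iff]
  intro g hg e
  have h := congr_arg (fun y => y (a e) - y (b e)) hg
  simp only [Finset.sum_apply, Pi.smul_apply, smul_eq_mul, ← sum_sub_distrib, ← mul_sub,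
    qI_sub_qI hI ho, mul_ite, mul_zero, Pi.zero_apply, sub_zero] at h
  simpa [ho.card_ne_zero e] using h

lemma sum_smul_qI_eq (hI : G.IsFarSide (Fin.last n) I) (hG : G.IsTree)
    (ho : IsOrientation I a b) (hx : x (Fin.last n) = 0) :
    ∑ e : G.edgeSet, ((I e).card * (x (a e) - x (b e))) • qI (I e) = x := by
  funext v
  rw [← sub_zero (x v), ← hx, ← hI.sum_ite_mem_sub_eq hG ho x v, Finset.sum_apply]
  refine sum_congr rfl fun e _ => ?_
  by_cases hv : v ∈ I e
  · simp only [Pi.smul_apply, smul_eq_mul, qI, if_pos hv]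
    field_simp [ho.card_ne_zero e]
  · simp [qI, hv]

lemma sum_card_mul_sub_eq_one (hI : G.IsFarSide (Fin.last n) I) (hG : G.IsTree)
    (ho : IsOrientation I a b) (hx : x ∈ U n) :
    ∑ e : G.edgeSet, ((I e).card : ℝ) * (x (a e) - x (b e)) = 1 := by
  have h := congr_arg (fun y => ∑ v, y v) (sum_smul_qI_eq hI hG ho hx.1)
  simp only [Finset.sum_apply, Pi.smul_apply, smul_eq_mul] at h
  rw [sum_comm] at h
  simp_rw [← mul_sum, sum_qI ⟨a _, ho.mem _⟩, mul_one] at h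
  rw [h, sum_eq_one_of_mem_U hx]

lemma convexHull_range_qI (hI : G.IsFarSide (Fin.last n) I) (hG : G.IsTree)
    (ho : IsOrientation I a b) :
    convexHull ℝ (Set.range fun e : G.edgeSet => qI (I e)) =
      {x | x ∈ U n ∧ ∀ e, x (b e) ≤ x (a e)} := by
  apply subset_antisymm
  · refine convexHull_min ?_ ?_
    · rintro _ ⟨f, rfl⟩
      refine ⟨qI_mem_U ⟨a f, ho.mem f⟩ (hI.root_notMem f.2), fun e => sub_nonneg.mp ?_⟩
      rw [qI_sub_qI hI ho]
      split_ifs <;> positivity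
    · rintro x ⟨hxU, hx⟩ y ⟨hyU, hy⟩ s t hs ht hst
      refine ⟨convex_U hxU hyU hs ht hst, fun e => ?_⟩
      simp only [Pi.add_apply, Pi.smul_apply, smul_eq_mul]
      gcongr
      exacts [hx e, hy e]
  · rintro x ⟨hxU, hx⟩
    refine mem_convexHull_of_exists_fintype _ _ (fun e => ?_)
      (sum_card_mul_sub_eq_one hI hG ho hxU) Set.mem_range_self (sum_smul_qI_eq hI hG ho hxU.1)
    exact mul_nonneg (Nat.cast_nonneg _) (sub_nonneg.mpr (hx e))

lemma isBounded_openCell_of_forall_le (hGμ : ∀ i j, G.Adj i j ↔ 1 ≤ μ i j)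
    (hI : G.IsFarSide (Fin.last n) I) (hG : G.IsTree) (ho : IsOrientation I a b)
    (hx : ∀ e, x (b e) ≤ x (a e)) : IsBounded (openCell μ x) := by
  refine isBounded_U_inter_nonneg.subset fun y hy => ⟨hy.1, fun v => ?_⟩
  have hy_le : ∀ e, y (b e) ≤ y (a e) := fun e =>
    not_lt.mp fun h => (hx e).not_gt (((hy.2 _ _ ((hGμ _ _).mp (ho.adj e))).1).mp h)
  simpa [hy.1.1] using hI.root_le hG ho hy_le v

end Tree

theorem stmt8_general {n : ℕ} (μ : Fin (n + 1) → Fin (n + 1) → ℕ)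
    (G' : SimpleGraph (Fin (n + 1))) (hG' : ∀ i j, G'.Adj i j ↔ 1 ≤ μ i j)
    (htree : G'.IsTree)
    (Ie : Sym2 (Fin (n + 1)) → Finset (Fin (n + 1)))
    (hIe : ∀ e ∈ G'.edgeSet, ∀ v : Fin (n + 1),
      v ∈ Ie e ↔ ¬ (G'.deleteEdges {e}).Reachable v (Fin.last n)) :
    Nat.card G'.edgeSet = n ∧
    AffineIndependent ℝ (fun e : G'.edgeSet => qI (Ie e)) ∧
    (⋃ p ∈ {p | p ∈ U n ∧ Bornology.IsBounded (openCell μ p)}, openCell μ p) =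
      convexHull ℝ (Set.range fun e : G'.edgeSet => qI (Ie e)) := by
  classical
  have hI : G'.IsFarSide (Fin.last n) Ie := hIe
  obtain ⟨a, b, ho⟩ := hI.exists_isOrientation htree
  refine ⟨by simpa using (SimpleGraph.isTree_iff_connected_and_card.mp htree).2,
    (linearIndependent_qI hI ho).affineIndependent, ?_⟩
  rw [convexHull_range_qI hI htree ho]
  ext x
  simp only [Set.mem_iUnion, Set.mem_ofPred_eq, exists_prop]
  constructor
  · rintro ⟨p, ⟨-, hp⟩, hxp⟩
    refine ⟨hxp.1, fun e => not_lt.mp fun he => ?_⟩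
    exact not_isBounded_openCell_of_lt hG' hI ho hxp.1 he (hp.subset (openCell_subset_openCell hxp))
  · rintro ⟨hxU, hx⟩
    exact ⟨x, ⟨hxU, isBounded_openCell_of_forall_le hG' hI htree ho hx⟩, mem_openCell_self hxU⟩

/-- for a simple tree `G`, the points `q_e = (1/|I_e|)·e_{I_e}`, one for each
of the `n` edges `e` of `G` (where `I_e` is the component of `G − e` missing `n+1`), are
affinely independent and the union of the bounded cells is their convex hull: the bounded
complex is an `(n-1)`-simplex. -/
theorem stmt8 {n : ℕ} (hn : 1 ≤ n) (μ : Fin (n + 1) → Fin (n + 1) → ℕ)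
    (hsym : ∀ i j, μ i j = μ j i) (hloop : ∀ i, μ i i = 0)
    (hsimple : ∀ i j, μ i j ≤ 1)
    (G' : SimpleGraph (Fin (n + 1))) (hG' : ∀ i j, G'.Adj i j ↔ 1 ≤ μ i j)
    (htree : G'.IsTree)
    (Ie : Sym2 (Fin (n + 1)) → Finset (Fin (n + 1)))
    (hIe : ∀ e ∈ G'.edgeSet, ∀ v : Fin (n + 1),
      v ∈ Ie e ↔ ¬ (G'.deleteEdges {e}).Reachable v (Fin.last n)) :
    Nat.card G'.edgeSet = n ∧
    AffineIndependent ℝ (fun e : G'.edgeSet => qI (Ie e)) ∧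
    (⋃ p ∈ {p | p ∈ U n ∧ Bornology.IsBounded (openCell μ p)}, openCell μ p) =
      convexHull ℝ (Set.range fun e : G'.edgeSet => qI (Ie e)) :=
  stmt8_general μ G' hG' htree Ie hIe
end

section
/- Let I ⊆ [n] be nonempty and suppose V∖I = J_1 ⊎ J_2 where J_1, J_2 are nonempty, n+1 ∈ J_2, and there is no edge of G between J_1 and J_2 (μ(i,j) = 0 for all i ∈ J_1, j ∈ J_2). Then ε_{I ∪ J_1}(i) ≤ ε_I(i) for every i ∈ [n]; equivalently, the monomial m_{I ∪ J_1} divides m_I. -/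
open Finset

theorem compl_sup_eq_of_compl_eq_sup {α : Type*} [BooleanAlgebra α] {I J₁ J₂ : α}
    (hdisj : Disjoint J₁ J₂) (hcompl : Iᶜ = J₁ ⊔ J₂) : (I ⊔ J₁)ᶜ = J₂ := by
  rw [compl_sup, hcompl, ← sdiff_eq, sup_sdiff_left_self, hdisj.symm.sdiff_eq_left]

section Multigraph

variable {n : ℕ} (μ : Fin (n + 1) → Fin (n + 1) → ℕ)

theorem dI_antitone {I I' : Finset (Fin (n + 1))} (h : I ⊆ I') (i : Fin (n + 1)) :
    dI μ I' i ≤ dI μ I i :=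
  sum_le_sum_of_subset (compl_subset_compl.mpr h)

theorem epsI_union_le {I J : Finset (Fin (n + 1))}
    (hnoedge : ∀ i ∈ J, ∀ j ∈ (I ∪ J)ᶜ, μ i j = 0) (i : Fin (n + 1)) :
    epsI μ (I ∪ J) i ≤ epsI μ I i := by
  unfold epsI
  by_cases hiI : i ∈ I
  · simpa [hiI] using dI_antitone μ subset_union_left i
  by_cases hiJ : i ∈ J
  · simp only [mem_union, hiI, hiJ, or_true, if_true, if_false, nonpos_iff_eq_zero]
    exact sum_eq_zero (hnoedge i hiJ)
  · simp [hiI, hiJ]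

theorem mI_dvd_mI_of_epsI_le (k : Type*) [Field k] {I I' : Finset (Fin (n + 1))}
    (h : ∀ i : Fin n, epsI μ I' i.castSucc ≤ epsI μ I i.castSucc) : mI k μ I' ∣ mI k μ I :=
  prod_dvd_prod_of_dvd _ _ fun i _ => pow_dvd_pow _ (h i)

end Multigraph

theorem stmt12_general {n : ℕ} (k : Type*) [Field k]
    (μ : Fin (n + 1) → Fin (n + 1) → ℕ)
    (I J₁ J₂ : Finset (Fin (n + 1)))
    (hdisj : Disjoint J₁ J₂)
    (hcompl : Iᶜ = J₁ ∪ J₂)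
    (hnoedge : ∀ i ∈ J₁, ∀ j ∈ J₂, μ i j = 0) :
    (∀ i : Fin n, epsI μ (I ∪ J₁) i.castSucc ≤ epsI μ I i.castSucc) ∧
    mI k μ (I ∪ J₁) ∣ mI k μ I := by
  have hcomp : (I ∪ J₁)ᶜ = J₂ := compl_sup_eq_of_compl_eq_sup hdisj hcompl
  have heps : ∀ i : Fin n, epsI μ (I ∪ J₁) i.castSucc ≤ epsI μ I i.castSucc :=
    fun i => epsI_union_le μ (hcomp ▸ hnoedge) i.castSucc
  exact ⟨heps, mI_dvd_mI_of_epsI_le μ k heps⟩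

/-- if `V∖I = J₁ ⊎ J₂` with `n+1 ∈ J₂` and no edges between `J₁` and `J₂`,
then `ε_{I ∪ J₁} ≤ ε_I` componentwise, i.e. `m_{I ∪ J₁}` divides `m_I`. -/
theorem stmt12 {n : ℕ} (hn : 1 ≤ n) (k : Type*) [Field k]
    (μ : Fin (n + 1) → Fin (n + 1) → ℕ)
    (hsym : ∀ i j, μ i j = μ j i) (hloop : ∀ i, μ i i = 0)
    (hconn : ConnectedOn μ Set.univ)
    (I J₁ J₂ : Finset (Fin (n + 1))) (hI : I.Nonempty) (hIlast : Fin.last n ∉ I)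
    (hJ₁ : J₁.Nonempty) (hJ₂ : J₂.Nonempty) (hdisj : Disjoint J₁ J₂)
    (hcompl : Iᶜ = J₁ ∪ J₂) (hlast : Fin.last n ∈ J₂)
    (hnoedge : ∀ i ∈ J₁, ∀ j ∈ J₂, μ i j = 0) :
    (∀ i : Fin n, epsI μ (I ∪ J₁) i.castSucc ≤ epsI μ I i.castSucc) ∧
    mI k μ (I ∪ J₁) ∣ mI k μ I :=
  stmt12_general k μ I J₁ J₂ hdisj hcompl hnoedge
end
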